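/- arXiv:1609.03977 — 3 statements merged into one kernel-verified Lean document; each statement's English description precedes it below -/
import Mathlib

section
/- Let $G$ be a finite connected (multi)graph with unit conductances, and $x,y$ two distinct vertices. Then $E_x[T_y^2]+E_y[T_x^2]\leq 16\,|E(G)|^2\,\mathrm{diam}(G)\,R_{\mathrm{eff}}(x,y)$, where $T_z$ is the hitting time of $z$ by the simple random walk, $|E(G)|$ is the number of edges, $\mathrm{diam}(G)$ is the graph diameter, and $R_{\mathrm{eff}}$ is the effective resistance. -/
open scoped BigOperators

noncomputable section

/-- Invariant measure `π x = ∑_y c x y` of the electrical network with conductances `c`. -/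
def netPi {V : Type*} [Fintype V] (c : V → V → ℝ) (x : V) : ℝ := ∑ y, c x y

/-- One-step transition probability of the random walk associated to the network:
`P(x,y) = c x y / π x`. -/
def netStep {V : Type*} [Fintype V] (c : V → V → ℝ) (x y : V) : ℝ := c x y / netPi c x

/-- `hitPMF c y n v` is the probability that the walk started at `v` hits `y`
for the first time exactly at time `n`, i.e. `P_v[T_y = n]`. -/
def hitPMF {V : Type*} [Fintype V] [DecidableEq V] (c : V → V → ℝ) (y : V) : ℕ → V → ℝ
  | 0, v => if v = y then 1 else 0
  | n + 1, v => if v = y then 0 else ∑ u, netStep c v u * hitPMF c y n u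

/-- `E_x[T_y ^ k]`, the `k`-th moment of the hitting time of `y` starting from `x`. -/
def hitMoment {V : Type*} [Fintype V] [DecidableEq V] (c : V → V → ℝ) (x y : V) (k : ℕ) : ℝ :=
  ∑' n : ℕ, (n : ℝ) ^ k * hitPMF c y n x

/-- `escapeAux c x y n v` : probability that the walk started at `v` reaches `y` for the
first time at time `n` without visiting `x` before. -/
def escapeAux {V : Type*} [Fintype V] [DecidableEq V] (c : V → V → ℝ) (x y : V) : ℕ → V → ℝ
  | 0, v => if v = y then 1 else 0
  | n + 1, v => if v = y then 0 else if v = x then 0 else ∑ u, netStep c v u * escapeAux c x y n u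

/-- Escape probability `P_x[T_y < T_x^+]`. -/
def escapeProb {V : Type*} [Fintype V] [DecidableEq V] (c : V → V → ℝ) (x y : V) : ℝ :=
  ∑' n : ℕ, ∑ u, netStep c x u * escapeAux c x y n u

/-- Effective resistance, via the classical identity
`R_eff(x,y) = 1 / (π(x) · P_x[T_y < T_x^+])`. -/
def Reff {V : Type*} [Fintype V] [DecidableEq V] (c : V → V → ℝ) (x y : V) : ℝ :=
  1 / (netPi c x * escapeProb c x y)


namespace CTB

open Finset

variable {V : Type*} [Fintype V] [DecidableEq V]

/-- Iteration of the substochastic kernel `P` killed on the set `k`. -/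
noncomputable def kit (P : V → V → ℝ) (k : Finset V) (f : V → ℝ) : ℕ → V → ℝ
  | 0 => f
  | n + 1 => fun v => if v ∈ k then 0 else ∑ u, P v u * kit P k f n u

/-- Dirac delta at `b`. -/
def dd (b : V) : V → ℝ := fun u => if u = b then 1 else 0

variable {P : V → V → ℝ} {k k' : Finset V} {f g : V → ℝ}

lemma kit_zero (f : V → ℝ) : kit P k f 0 = f := rfl

lemma kit_succ (f : V → ℝ) (n : ℕ) (v : V) :
    kit P k f (n + 1) v = if v ∈ k then 0 else ∑ u, P v u * kit P k f n u := rfl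

lemma kit_nonneg (hP0 : ∀ v u, 0 ≤ P v u) (hf : ∀ v, 0 ≤ f v) :
    ∀ n v, 0 ≤ kit P k f n v := by
  intro n
  induction n with
  | zero => exact hf
  | succ n ih =>
    intro v
    rw [kit_succ]
    split
    · exact le_refl _
    · exact Finset.sum_nonneg fun u _ => mul_nonneg (hP0 _ _) (ih u)

lemma kit_mono_f (hP0 : ∀ v u, 0 ≤ P v u) (hfg : ∀ v, f v ≤ g v) :
    ∀ n v, kit P k f n v ≤ kit P k g n v := by
  intro n
  induction n with
  | zero => exact hfg
  | succ n ih =>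
    intro v
    rw [kit_succ, kit_succ]
    split
    · exact le_refl _
    · exact Finset.sum_le_sum fun u _ => mul_le_mul_of_nonneg_left (ih u) (hP0 _ _)

lemma kit_le_one (hP0 : ∀ v u, 0 ≤ P v u) (hP1 : ∀ v, ∑ u, P v u = 1)
    (hf0 : ∀ v, 0 ≤ f v) (hf1 : ∀ v, f v ≤ 1) :
    ∀ n v, kit P k f n v ≤ 1 := by
  intro n
  induction n with
  | zero => exact hf1
  | succ n ih =>
    intro v
    rw [kit_succ]
    split
    · exact zero_le_one
    · calc ∑ u, P v u * kit P k f n u ≤ ∑ u, P v u * 1 :=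
            Finset.sum_le_sum fun u _ => mul_le_mul_of_nonneg_left (ih u) (hP0 _ _)
        _ = 1 := by simp [hP1 v]

lemma kit_add (f g : V → ℝ) :
    ∀ n v, kit P k (fun u => f u + g u) n v = kit P k f n v + kit P k g n v := by
  intro n
  induction n with
  | zero => intro v; rfl
  | succ n ih =>
    intro v
    rw [kit_succ, kit_succ, kit_succ]
    split
    · ring
    · simp only [ih, mul_add, Finset.sum_add_distrib]

lemma kit_smul (a : ℝ) (f : V → ℝ) :
    ∀ n v, kit P k (fun u => a * f u) n v = a * kit P k f n v := by
  intro n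
  induction n with
  | zero => intro v; rfl
  | succ n ih =>
    intro v
    rw [kit_succ, kit_succ]
    split
    · ring
    · rw [Finset.mul_sum]
      exact Finset.sum_congr rfl fun u _ => by rw [ih]; ring

lemma kit_zero_f : ∀ n v, kit P k (fun _ => (0:ℝ)) n v = 0 := by
  intro n
  induction n with
  | zero => intro v; rfl
  | succ n ih =>
    intro v
    rw [kit_succ]
    split
    · rfl
    · simp [ih]

lemma kit_sum {ι : Type*} (s : Finset ι) (F : ι → V → ℝ) :
    ∀ n v, kit P k (fun u => ∑ i ∈ s, F i u) n v = ∑ i ∈ s, kit P k (F i) n v := by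
  intro n
  induction n with
  | zero => intro v; rfl
  | succ n ih =>
    intro v
    rw [kit_succ]
    split
    · simp [kit_succ, *]
    · next h =>
      simp only [ih, Finset.mul_sum]
      rw [Finset.sum_comm]
      exact Finset.sum_congr rfl fun i _ => by rw [kit_succ, if_neg h]

lemma kit_add_apply (f : V → ℝ) (m n : ℕ) :
    kit P k f (m + n) = kit P k (kit P k f n) m := by
  induction m with
  | zero => simp [kit_zero]
  | succ m ih =>
    funext v
    have : m + 1 + n = (m + n) + 1 := by omega
    rw [this, kit_succ, kit_succ]
    simp only [ih]

lemma kit_succ_eq (f : V → ℝ) (n : ℕ) :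
    kit P k f (n + 1) = kit P k (kit P k f 1) n := kit_add_apply f n 1

lemma kit_mono_k (hP0 : ∀ v u, 0 ≤ P v u) (hf : ∀ v, 0 ≤ f v) (hkk : k ⊆ k') :
    ∀ n v, kit P k' f n v ≤ kit P k f n v := by
  intro n
  induction n with
  | zero => intro v; exact le_refl _
  | succ n ih =>
    intro v
    by_cases hv' : v ∈ k'
    · rw [kit_succ, if_pos hv']
      exact kit_nonneg hP0 hf (n + 1) v
    · have hv : v ∉ k := fun h => hv' (hkk h)
      rw [kit_succ, kit_succ, if_neg hv', if_neg hv]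
      exact Finset.sum_le_sum fun u _ => mul_le_mul_of_nonneg_left (ih u) (hP0 _ _)

lemma kit_dd_of_mem {b : V} (hb : b ∉ k) {v : V} (hvk : v ∈ k) :
    ∀ m, kit P (insert b k) (dd b) m v = 0 := by
  have hvb : v ≠ b := by rintro rfl; exact hb hvk
  intro m
  cases m with
  | zero => simp [kit_zero, dd, hvb]
  | succ m => rw [kit_succ, if_pos (Finset.mem_insert_of_mem hvk)]

/-- First-passage decomposition: kill additionally at `b`, splitting according to the
first visit to `b`. -/
lemma kit_insert {b : V} (hb : b ∉ k) (f : V → ℝ) :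
    ∀ n v, kit P k f n v =
      kit P (insert b k) (fun u => if u = b then 0 else f u) n v +
        ∑ m ∈ Finset.range (n + 1),
          kit P (insert b k) (dd b) m v * kit P k f (n - m) b := by
  intro n
  induction n with
  | zero =>
    intro v
    by_cases hv : v = b
    · subst hv; simp [kit_zero, dd]
    · simp [kit_zero, dd, hv]
  | succ n ih =>
    intro v
    by_cases hvk : v ∈ k
    · have hvb : v ≠ b := by rintro rfl; exact hb hvk
      have h1 : kit P k f (n + 1) v = 0 := by rw [kit_succ, if_pos hvk]
      have h2 : kit P (insert b k) (fun u => if u = b then 0 else f u) (n + 1) v = 0 := by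
        rw [kit_succ, if_pos (Finset.mem_insert_of_mem hvk)]
      have h3 : ∀ m ∈ Finset.range (n + 2),
          kit P (insert b k) (dd b) m v * kit P k f (n + 1 - m) b = 0 := by
        intro m _
        rw [kit_dd_of_mem hb hvk, zero_mul]
      rw [h1, h2, Finset.sum_congr rfl h3]
      simp
    · by_cases hvb : v = b
      · subst hvb
        have h2 : kit P (insert v k) (fun u => if u = v then 0 else f u) (n + 1) v = 0 := by
          rw [kit_succ, if_pos (Finset.mem_insert_self _ _)]
        rw [h2, zero_add]
        rw [Finset.sum_eq_single_of_mem 0 (Finset.mem_range.2 (by omega))]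
        · simp [kit_zero, dd]
        · intro m _ hm
          obtain ⟨m', rfl⟩ : ∃ m', m = m' + 1 := ⟨m - 1, by omega⟩
          rw [kit_succ, if_pos (Finset.mem_insert_self _ _), zero_mul]
      · have hvi : v ∉ insert b k := by
          simp only [Finset.mem_insert]
          tauto
        have lhs1 : kit P k f (n + 1) v = ∑ u, P v u * kit P k f n u := by
          rw [kit_succ, if_neg hvk]
        have rhs1 : kit P (insert b k) (fun u => if u = b then 0 else f u) (n + 1) v
            = ∑ u, P v u * kit P (insert b k) (fun u => if u = b then 0 else f u) n u := by
          rw [kit_succ, if_neg hvi]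
        have rhs2 : ∀ m : ℕ, kit P (insert b k) (dd b) (m + 1) v
            = ∑ u, P v u * kit P (insert b k) (dd b) m u := by
          intro m; rw [kit_succ, if_neg hvi]
        rw [lhs1, rhs1]
        have expand : ∀ u, P v u * kit P k f n u =
            P v u * kit P (insert b k) (fun u => if u = b then 0 else f u) n u +
              ∑ m ∈ Finset.range (n + 1),
                P v u * (kit P (insert b k) (dd b) m u * kit P k f (n - m) b) := by
          intro u
          rw [ih u, mul_add, Finset.mul_sum]
        rw [Finset.sum_congr rfl fun u _ => expand u, Finset.sum_add_distrib]
        congr 1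
        rw [Finset.sum_comm]
        have swap : ∀ m ∈ Finset.range (n + 1),
            ∑ u, P v u * (kit P (insert b k) (dd b) m u * kit P k f (n - m) b)
              = kit P (insert b k) (dd b) (m + 1) v * kit P k f (n - m) b := by
          intro m _
          rw [rhs2 m, Finset.sum_mul]
          exact Finset.sum_congr rfl fun u _ => by ring
        rw [Finset.sum_congr rfl swap]
        have split : ∑ m ∈ Finset.range (n + 2),
            kit P (insert b k) (dd b) m v * kit P k f (n + 1 - m) b
            = (∑ m ∈ Finset.range (n + 1),
                kit P (insert b k) (dd b) (m + 1) v * kit P k f (n + 1 - (m + 1)) b) +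
              kit P (insert b k) (dd b) 0 v * kit P k f (n + 1 - 0) b :=
          Finset.sum_range_succ' _ (n + 1)
        rw [split]
        have h0 : kit P (insert b k) (dd b) 0 v * kit P k f (n + 1 - 0) b = 0 := by
          simp [kit_zero, dd, hvb]
        rw [h0, add_zero]
        exact Finset.sum_congr rfl fun m _ => by rw [Nat.succ_sub_succ]


/-! ### Geometric decay -/

lemma kit_one_one (hP1 : ∀ v, ∑ u, P v u = 1) :
    kit P k (fun _ => (1:ℝ)) 1 = fun v => if v ∈ k then 0 else 1 := by
  funext v
  by_cases hv : v ∈ k <;> simp [kit_succ, kit_zero, hv, hP1 v]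

lemma kit_one_succ (hP1 : ∀ v, ∑ u, P v u = 1) (n : ℕ) :
    kit P k (fun _ => (1:ℝ)) (n + 1) = kit P k (fun v => if v ∈ k then 0 else 1) n := by
  rw [kit_succ_eq, kit_one_one hP1]

lemma kit_one_antitone (hP0 : ∀ v u, 0 ≤ P v u) (hP1 : ∀ v, ∑ u, P v u = 1) (v : V) :
    Antitone fun n => kit P k (fun _ => (1:ℝ)) n v := by
  refine antitone_nat_of_succ_le fun n => ?_
  rw [kit_one_succ hP1]
  exact kit_mono_f hP0 (fun u => by split <;> norm_num) n v

/-- `Dec P k` : the walk killed on `k` dies out geometrically fast. -/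
def Dec (P : V → V → ℝ) (k : Finset V) : Prop :=
  ∃ C t : ℝ, 0 < C ∧ 0 < t ∧ t < 1 ∧ ∀ n v, kit P k (fun _ => (1:ℝ)) n v ≤ C * t ^ n

lemma dec_of_reach [Nonempty V] (hP0 : ∀ v u, 0 ≤ P v u) (hP1 : ∀ v, ∑ u, P v u = 1)
    (hreach : ∀ v, ∃ n, kit P k (fun _ => (1:ℝ)) n v < 1) : Dec P k := by
  choose nv hnv using hreach
  set D := Finset.univ.sup nv with hD
  have hD0 : D ≠ 0 := by
    intro h
    obtain ⟨v⟩ := ‹Nonempty V›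
    have h1 : nv v = 0 :=
      Nat.le_zero.mp (h ▸ Finset.le_sup (f := nv) (Finset.mem_univ v))
    have h2 := hnv v
    rw [h1] at h2
    simp [kit_zero] at h2
  have hDpos : 0 < D := Nat.pos_of_ne_zero hD0
  have hDv : ∀ v, kit P k (fun _ => (1:ℝ)) D v < 1 := fun v =>
    lt_of_le_of_lt (kit_one_antitone hP0 hP1 v (Finset.le_sup (Finset.mem_univ v))) (hnv v)
  have hne : (Finset.univ : Finset V).Nonempty := Finset.univ_nonempty
  set r : ℝ := max (1/2) (Finset.univ.sup' hne fun v => kit P k (fun _ => (1:ℝ)) D v) with hr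
  have hr0 : 0 < r := lt_of_lt_of_le one_half_pos (le_max_left _ _)
  have hr1 : r < 1 := by
    refine max_lt (by norm_num) ?_
    exact (Finset.sup'_lt_iff hne).mpr fun v _ => hDv v
  have hrD : ∀ v, kit P k (fun _ => (1:ℝ)) D v ≤ r := fun v =>
    le_trans (Finset.le_sup' _ (Finset.mem_univ v)) (le_max_right _ _)
  have claim : ∀ q j v, kit P k (fun _ => (1:ℝ)) (q * D + j) v ≤ r ^ q := by
    intro q
    induction q with
    | zero =>
      intro j v
      simpa using kit_le_one hP0 hP1 (fun _ => zero_le_one) (fun _ => le_refl 1) j v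
    | succ q ih =>
      intro j v
      have hn : (q + 1) * D + j = (q * D + j) + D := by ring
      rw [hn, kit_add_apply _ (q * D + j) D]
      calc kit P k (kit P k (fun _ => (1:ℝ)) D) (q * D + j) v
          ≤ kit P k (fun _ => r) (q * D + j) v :=
            kit_mono_f hP0 (fun u => hrD u) _ v
        _ = r * kit P k (fun _ => (1:ℝ)) (q * D + j) v := by
            rw [show (fun _ : V => r) = fun u : V => r * (1:ℝ) from by funext; ring]
            exact kit_smul r _ _ _
        _ ≤ r * r ^ q := mul_le_mul_of_nonneg_left (ih j v) hr0.le
        _ = r ^ (q + 1) := by ring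
  have bound : ∀ n v, kit P k (fun _ => (1:ℝ)) n v ≤ r ^ (n / D) := by
    intro n v
    have h := claim (n / D) (n % D) v
    rwa [Nat.div_add_mod' n D] at h
  set t : ℝ := r ^ ((1:ℝ) / (D:ℝ)) with htdef
  have hDcast : (0:ℝ) < (D:ℝ) := by exact_mod_cast hDpos
  have ht0 : 0 < t := Real.rpow_pos_of_pos hr0 _
  have ht1 : t < 1 := Real.rpow_lt_one hr0.le hr1 (by positivity)
  have htD : t ^ D = r := by
    rw [htdef, ← Real.rpow_natCast (r ^ ((1:ℝ)/(D:ℝ))) D, ← Real.rpow_mul hr0.le]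
    rw [show (1:ℝ)/(D:ℝ) * (D:ℝ) = 1 from by field_simp, Real.rpow_one]
  refine ⟨(1/t) ^ D, t, by positivity, ht0, ht1, fun n v => ?_⟩
  have h1 : kit P k (fun _ => (1:ℝ)) n v ≤ t ^ (D * (n / D)) := by
    rw [pow_mul, htD]; exact bound n v
  have h2 : t ^ (D * (n / D)) ≤ t ^ (n - D) := by
    refine pow_le_pow_of_le_one ht0.le ht1.le ?_
    have h3 : n < n / D * D + D := Nat.lt_div_mul_add hDpos
    have h4 : n / D * D = D * (n / D) := mul_comm _ _
    omega
  have h5 : t ^ (n - D) ≤ (1/t) ^ D * t ^ n := by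
    rw [one_div, inv_pow, ← div_eq_inv_mul, le_div_iff₀ (pow_pos ht0 D), ← pow_add]
    exact pow_le_pow_of_le_one ht0.le ht1.le le_tsub_add
  exact le_trans (le_trans h1 h2) h5

lemma Dec.mono (hd : Dec P k) (hP0 : ∀ v u, 0 ≤ P v u) (hkk : k ⊆ k') : Dec P k' := by
  obtain ⟨C, t, hC, ht0, ht1, hb⟩ := hd
  exact ⟨C, t, hC, ht0, ht1, fun n v =>
    le_trans (kit_mono_k hP0 (fun _ => zero_le_one) hkk n v) (hb n v)⟩

lemma summable_geom_aux {C t : ℝ} (ht0 : 0 ≤ t) (ht1 : t < 1) {g : ℕ → ℝ}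
    (hg0 : ∀ n, 0 ≤ g n) (hg : ∀ n, g n ≤ C * t ^ n) (j : ℕ) :
    Summable fun n : ℕ => (n:ℝ) ^ j * g n := by
  have hs : Summable fun n : ℕ => C * ((n:ℝ) ^ j * t ^ n) :=
    (summable_pow_mul_geometric_of_norm_lt_one j
      (by rwa [Real.norm_eq_abs, abs_of_nonneg ht0])).mul_left C
  refine Summable.of_nonneg_of_le (fun n => mul_nonneg (by positivity) (hg0 n)) (fun n => ?_) hs
  calc (n:ℝ) ^ j * g n ≤ (n:ℝ) ^ j * (C * t ^ n) :=
        mul_le_mul_of_nonneg_left (hg n) (by positivity)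
    _ = C * ((n:ℝ) ^ j * t ^ n) := by ring

lemma Dec.summable_pow (hd : Dec P k) (hP0 : ∀ v u, 0 ≤ P v u)
    (hf0 : ∀ v, 0 ≤ f v) (hf1 : ∀ v, f v ≤ 1) (j : ℕ) (v : V) :
    Summable fun n : ℕ => (n:ℝ) ^ j * kit P k f n v := by
  obtain ⟨C, t, hC, ht0, ht1, hb⟩ := hd
  exact summable_geom_aux ht0.le ht1 (fun n => kit_nonneg hP0 hf0 n v)
    (fun n => le_trans (kit_mono_f hP0 hf1 n v) (hb n v)) j

lemma Dec.summable (hd : Dec P k) (hP0 : ∀ v u, 0 ≤ P v u)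
    (hf0 : ∀ v, 0 ≤ f v) (hf1 : ∀ v, f v ≤ 1) (v : V) :
    Summable fun n => kit P k f n v :=
  (hd.summable_pow hP0 hf0 hf1 0 v).congr fun n => by simp

lemma Dec.tendsto_zero (hd : Dec P k) (hP0 : ∀ v u, 0 ≤ P v u)
    (hf0 : ∀ v, 0 ≤ f v) (hf1 : ∀ v, f v ≤ 1) (v : V) :
    Filter.Tendsto (fun n => kit P k f n v) Filter.atTop (nhds 0) := by
  obtain ⟨C, t, hC, ht0, ht1, hb⟩ := hd
  refine squeeze_zero (fun n => kit_nonneg hP0 hf0 n v)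
    (fun n => le_trans (kit_mono_f hP0 hf1 n v) (hb n v)) ?_
  simpa using (tendsto_pow_atTop_nhds_zero_of_lt_one ht0.le ht1).const_mul C


/-! ### Series rearrangement -/

/-- Weighted tail-sum swap: `∑ₙ (∑_{m<n} w m) g n = ∑ₘ w m ∑ⱼ g (j+m+1)`. -/
lemma tsum_weighted_tail {w g : ℕ → ℝ} (hw0 : ∀ m, 0 ≤ w m) (hg0 : ∀ n, 0 ≤ g n)
    (hgs : Summable g)
    (hs : Summable fun n : ℕ => (∑ m ∈ Finset.range n, w m) * g n) :
    ∑' n : ℕ, (∑ m ∈ Finset.range n, w m) * g n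
      = ∑' m : ℕ, w m * ∑' j : ℕ, g (j + (m + 1)) := by
  set F : ℕ × ℕ → ℝ := fun p => if p.2 < p.1 then w p.2 * g p.1 else 0 with hF
  have hF0 : ∀ p, 0 ≤ F p := by
    intro p
    simp only [hF]
    split
    · exact mul_nonneg (hw0 _) (hg0 _)
    · exact le_refl 0
  have hFout : ∀ n : ℕ, ∀ m ∉ Finset.range n, F (n, m) = 0 := by
    intro n m hm
    simp only [hF]
    rw [if_neg (by simp at hm; omega)]
  have fiber1 : ∀ n : ℕ, ∑' m : ℕ, F (n, m) = (∑ m ∈ Finset.range n, w m) * g n := by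
    intro n
    rw [tsum_eq_sum (hFout n)]
    rw [Finset.sum_mul]
    refine Finset.sum_congr rfl fun m hm => ?_
    simp [hF, Finset.mem_range.mp hm]
  have hFsum : Summable F := by
    rw [summable_prod_of_nonneg hF0]
    refine ⟨fun n => summable_of_ne_finset_zero (hFout n), ?_⟩
    exact hs.congr fun n => (fiber1 n).symm
  have fiber2 : ∀ m : ℕ, ∑' n : ℕ, F (n, m) = w m * ∑' j : ℕ, g (j + (m + 1)) := by
    intro m
    have htail : Summable fun j => g (j + (m + 1)) := (summable_nat_add_iff (m + 1)).mpr hgs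
    have hfun : (fun j => F (j + (m + 1), m)) = fun j => w m * g (j + (m + 1)) := by
      funext j
      simp only [hF]
      rw [if_pos (by omega)]
    have h1 : HasSum (fun j => F (j + (m + 1), m)) (w m * ∑' j : ℕ, g (j + (m + 1))) := by
      rw [hfun]
      exact (htail.hasSum).mul_left _
    have h2 := (hasSum_nat_add_iff (f := fun n => F (n, m)) (m + 1)).mp h1
    have h3 : ∑ i ∈ Finset.range (m + 1), F (i, m) = 0 := by
      refine Finset.sum_eq_zero fun i hi => ?_
      simp only [hF]
      rw [if_neg (by simp at hi; omega)]
    rw [h3, add_zero] at h2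
    exact h2.tsum_eq
  have swapsum : Summable fun q : ℕ × ℕ => F (q.2, q.1) := hFsum.prod_symm
  calc ∑' n : ℕ, (∑ m ∈ Finset.range n, w m) * g n
      = ∑' n : ℕ, ∑' m : ℕ, F (n, m) := by
        exact tsum_congr fun n => (fiber1 n).symm
    _ = ∑' p : ℕ × ℕ, F p := (Summable.tsum_prod' hFsum fun n => summable_of_ne_finset_zero (hFout n)).symm
    _ = ∑' q : ℕ × ℕ, F (q.2, q.1) := by
        rw [← (Equiv.prodComm ℕ ℕ).tsum_eq fun q : ℕ × ℕ => F (q.2, q.1)]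
        rfl
    _ = ∑' m : ℕ, ∑' n : ℕ, F (n, m) := by
        refine Summable.tsum_prod' swapsum fun m => ?_
        refine Summable.of_nonneg_of_le (fun n => hF0 _) (fun n => ?_) (hgs.mul_left (w m))
        simp only [hF]
        split
        · exact le_refl _
        · exact mul_nonneg (hw0 _) (hg0 _)
    _ = ∑' m : ℕ, w m * ∑' j : ℕ, g (j + (m + 1)) := tsum_congr fiber2

/-! ### Hitting time series -/

/-- Survival initial condition: `0` at `y`, `1` elsewhere. -/
def sOne (y : V) : V → ℝ := fun u => if u = y then 0 else 1

lemma sOne_nonneg (y : V) (v : V) : 0 ≤ sOne y v := by unfold sOne; split <;> norm_num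

lemma sOne_le_one (y : V) (v : V) : sOne y v ≤ 1 := by unfold sOne; split <;> norm_num

lemma dd_nonneg (b : V) (v : V) : 0 ≤ dd b v := by unfold dd; split <;> norm_num

lemma dd_le_one (b : V) (v : V) : dd b v ≤ 1 := by unfold dd; split <;> norm_num

/-- Partial hitting probabilities plus survival equal 1. -/
lemma psum_hit (hP1 : ∀ v, ∑ u, P v u = 1) (y : V) :
    ∀ n v, (∑ m ∈ Finset.range (n + 1), kit P {y} (dd y) m v) + kit P {y} (sOne y) n v = 1 := by
  intro n
  induction n with
  | zero =>
    intro v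
    by_cases hv : v = y <;> simp [kit_zero, dd, sOne, hv]
  | succ n ih =>
    intro v
    by_cases hv : v = y
    · have hmem : v ∈ ({y} : Finset V) := by simp [hv]
      rw [Finset.sum_eq_single_of_mem 0 (Finset.mem_range.2 (by omega))]
      · simp [kit_zero, dd, sOne, kit_succ, hmem, hv]
      · intro m _ hm
        obtain ⟨m', rfl⟩ : ∃ m', m = m' + 1 := ⟨m - 1, by omega⟩
        rw [kit_succ, if_pos hmem]
    · have hvk : v ∉ ({y} : Finset V) := by simpa using hv
      rw [Finset.sum_range_succ']
      have h0 : kit P {y} (dd y) 0 v = 0 := by simp [kit_zero, dd, hv]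
      rw [h0, add_zero]
      have hterm : ∀ m, kit P {y} (dd y) (m + 1) v = ∑ u, P v u * kit P {y} (dd y) m u :=
        fun m => by rw [kit_succ, if_neg hvk]
      rw [Finset.sum_congr rfl fun m _ => hterm m, kit_succ, if_neg hvk, Finset.sum_comm]
      rw [← Finset.sum_add_distrib]
      calc ∑ u, ((∑ m ∈ Finset.range (n + 1), P v u * kit P {y} (dd y) m u) +
              P v u * kit P {y} (sOne y) n u)
          = ∑ u, P v u * ((∑ m ∈ Finset.range (n + 1), kit P {y} (dd y) m u) +
              kit P {y} (sOne y) n u) := by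
            refine Finset.sum_congr rfl fun u _ => ?_
            rw [mul_add, Finset.mul_sum]
        _ = ∑ u, P v u * 1 := Finset.sum_congr rfl fun u _ => by rw [ih u]
        _ = 1 := by simp [hP1 v]

lemma hit_step (hP1 : ∀ v, ∑ u, P v u = 1) (y : V) (a : ℕ) (v : V) :
    kit P {y} (dd y) (a + 1) v = kit P {y} (sOne y) a v - kit P {y} (sOne y) (a + 1) v := by
  have h1 := psum_hit hP1 y a v
  have h2 := psum_hit hP1 y (a + 1) v
  rw [Finset.sum_range_succ] at h2
  linarith

/-- Tail of the hitting pmf is the survival probability. -/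
lemma hit_tail (hP0 : ∀ v u, 0 ≤ P v u) (hP1 : ∀ v, ∑ u, P v u = 1)
    {y : V} (hd : Dec P {y}) (m : ℕ) (v : V) :
    HasSum (fun j => kit P {y} (dd y) (j + (m + 1)) v) (kit P {y} (sOne y) m v) := by
  have hnn : ∀ j : ℕ, 0 ≤ kit P {y} (dd y) (j + (m + 1)) v :=
    fun j => kit_nonneg hP0 (dd_nonneg y) _ v
  rw [hasSum_iff_tendsto_nat_of_nonneg hnn]
  have hclosed : ∀ N : ℕ, ∑ j ∈ Finset.range N, kit P {y} (dd y) (j + (m + 1)) v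
      = kit P {y} (sOne y) m v - kit P {y} (sOne y) (m + N) v := by
    intro N
    induction N with
    | zero => simp
    | succ N ihN =>
      rw [Finset.sum_range_succ, ihN]
      have hst := hit_step hP1 y (m + N) v
      have harr : N + (m + 1) = (m + N) + 1 := by omega
      rw [harr, hst]
      have harr2 : m + (N + 1) = (m + N) + 1 := by omega
      rw [harr2]
      ring
  have hlim : Filter.Tendsto (fun N => kit P {y} (sOne y) (m + N) v) Filter.atTop (nhds 0) := by
    have h1 := hd.tendsto_zero hP0 (sOne_nonneg y) (sOne_le_one y) v
    have h2 : Filter.Tendsto (fun N : ℕ => m + N) Filter.atTop Filter.atTop :=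
      Filter.tendsto_atTop_mono (fun N => Nat.le_add_left N m) Filter.tendsto_id
    exact h1.comp h2
  have : Filter.Tendsto
      (fun N => kit P {y} (sOne y) m v - kit P {y} (sOne y) (m + N) v)
      Filter.atTop (nhds (kit P {y} (sOne y) m v - 0)) :=
    Filter.Tendsto.sub tendsto_const_nhds hlim
  rw [sub_zero] at this
  exact this.congr fun N => (hclosed N).symm

/-- Weighted moment identity: moments of the hitting time in terms of survival. -/
lemma moment_eq (hP0 : ∀ v u, 0 ≤ P v u) (hP1 : ∀ v, ∑ u, P v u = 1)
    {y : V} (hd : Dec P {y}) {w : ℕ → ℝ} (hw0 : ∀ m, 0 ≤ w m)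
    (hs : Summable fun n : ℕ => (∑ m ∈ Finset.range n, w m) * kit P {y} (dd y) n v) :
    ∑' n : ℕ, (∑ m ∈ Finset.range n, w m) * kit P {y} (dd y) n v
      = ∑' m : ℕ, w m * kit P {y} (sOne y) m v := by
  rw [tsum_weighted_tail hw0 (fun n => kit_nonneg hP0 (dd_nonneg y) n v)
    (hd.summable hP0 (dd_nonneg y) (dd_le_one y) v) hs]
  exact tsum_congr fun m => by rw [(hit_tail hP0 hP1 hd m v).tsum_eq]


/-! ### Representation, sub-probability, Cauchy products, reversibility -/

lemma kit_repr (f : V → ℝ) (n : ℕ) (v : V) :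
    kit P k f n v = ∑ u, kit P k (dd u) n v * f u := by
  calc kit P k f n v = kit P k (fun w => ∑ u, f u * dd u w) n v := by
        congr 1
        funext w
        simp [dd, mul_ite]
    _ = ∑ u, kit P k (fun w => f u * dd u w) n v := kit_sum Finset.univ _ n v
    _ = ∑ u, kit P k (dd u) n v * f u := by
        refine Finset.sum_congr rfl fun u _ => ?_
        rw [kit_smul]
        ring

lemma kit_dd_mem_zero' {b u : V} (hu : u ∈ k) (hbu : b ≠ u) :
    ∀ n, kit P k (dd b) n u = 0 := by
  intro n
  cases n with
  | zero => simp [kit_zero, dd, Ne.symm hbu]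
  | succ n => rw [kit_succ, if_pos hu]

lemma psum_dd_le_one (hP0 : ∀ v u, 0 ≤ P v u) (hP1 : ∀ v, ∑ u, P v u = 1)
    {b : V} (hb : b ∈ k) :
    ∀ N v, ∑ n ∈ Finset.range N, kit P k (dd b) n v ≤ 1 := by
  intro N
  induction N with
  | zero => intro v; simp
  | succ N ih =>
    intro v
    rw [Finset.sum_range_succ']
    by_cases hv : v ∈ k
    · have hz : ∀ n, kit P k (dd b) (n + 1) v = 0 := fun n => by rw [kit_succ, if_pos hv]
      rw [Finset.sum_congr rfl fun n _ => hz n]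
      simpa [kit_zero] using dd_le_one b v
    · have hvb : v ≠ b := fun h => hv (h ▸ hb)
      have h0 : kit P k (dd b) 0 v = 0 := by simp [kit_zero, dd, hvb]
      have hterm : ∀ n, kit P k (dd b) (n + 1) v = ∑ u, P v u * kit P k (dd b) n u :=
        fun n => by rw [kit_succ, if_neg hv]
      rw [h0, add_zero, Finset.sum_congr rfl fun n _ => hterm n, Finset.sum_comm]
      calc ∑ u, ∑ n ∈ Finset.range N, P v u * kit P k (dd b) n u
          = ∑ u, P v u * ∑ n ∈ Finset.range N, kit P k (dd b) n u := by
            refine Finset.sum_congr rfl fun u _ => (Finset.mul_sum _ _ _).symm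
        _ ≤ ∑ u, P v u * 1 :=
            Finset.sum_le_sum fun u _ => mul_le_mul_of_nonneg_left (ih u) (hP0 v u)
        _ = 1 := by simp [hP1 v]

lemma tsum_dd_le_one (hP0 : ∀ v u, 0 ≤ P v u) (hP1 : ∀ v, ∑ u, P v u = 1)
    (hd : Dec P k) {b : V} (hb : b ∈ k) (v : V) :
    ∑' n : ℕ, kit P k (dd b) n v ≤ 1 :=
  Summable.tsum_le_of_sum_range_le (hd.summable hP0 (dd_nonneg b) (dd_le_one b) v)
    (fun N => psum_dd_le_one hP0 hP1 hb N v)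

lemma tsum_cauchy {a b : ℕ → ℝ} (ha : Summable a) (hb : Summable b)
    (ha0 : ∀ n, 0 ≤ a n) (hb0 : ∀ n, 0 ≤ b n) :
    ∑' n : ℕ, ∑ m ∈ Finset.range (n + 1), a m * b (n - m) = (∑' n, a n) * (∑' n, b n) := by
  have han : Summable fun n => ‖a n‖ :=
    ha.congr fun n => by rw [Real.norm_eq_abs, abs_of_nonneg (ha0 n)]
  have hbn : Summable fun n => ‖b n‖ :=
    hb.congr fun n => by rw [Real.norm_eq_abs, abs_of_nonneg (hb0 n)]
  exact (tsum_mul_tsum_eq_tsum_sum_range_of_summable_norm han hbn).symm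

lemma kit_backpeel : ∀ (n : ℕ) (x b : V),
    kit P k (dd b) (n + 1) x = ∑ u, kit P k (dd u) n x * (if u ∈ k then 0 else P u b) := by
  intro n
  induction n with
  | zero =>
    intro x b
    have hR : ∑ u, kit P k (dd u) 0 x * (if u ∈ k then 0 else P u b)
        = if x ∈ k then 0 else P x b := by
      simp only [kit_zero, dd]
      rw [Finset.sum_congr rfl (fun u _ => show (if x = u then (1:ℝ) else 0) *
          (if u ∈ k then 0 else P u b) = if x = u then (if u ∈ k then 0 else P u b) else 0 from by
        by_cases h : x = u <;> simp [h])]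
      rw [Finset.sum_ite_eq Finset.univ x fun u => if u ∈ k then 0 else P u b]
      simp
    rw [hR, kit_succ]
    by_cases hx : x ∈ k
    · rw [if_pos hx, if_pos hx]
    · rw [if_neg hx, if_neg hx]
      simp only [kit_zero]
      rw [Finset.sum_congr rfl fun u _ => show P x u * dd b u = if u = b then P x u else 0 from by
        by_cases h : u = b <;> simp [dd, h]]
      rw [Finset.sum_ite_eq' Finset.univ b fun u => P x u]
      simp
  | succ n ih =>
    intro x b
    by_cases hx : x ∈ k
    · rw [kit_succ, if_pos hx]
      symm
      refine Finset.sum_eq_zero fun u _ => ?_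
      rw [kit_succ, if_pos hx, zero_mul]
    · rw [kit_succ, if_neg hx]
      rw [Finset.sum_congr rfl fun w _ => by rw [ih w b]]
      rw [Finset.sum_congr rfl fun w _ => show P x w * ∑ u, kit P k (dd u) n w *
          (if u ∈ k then 0 else P u b) = ∑ u, P x w * (kit P k (dd u) n w *
          (if u ∈ k then 0 else P u b)) from by rw [Finset.mul_sum]]
      rw [Finset.sum_comm]
      refine Finset.sum_congr rfl fun u _ => ?_
      rw [kit_succ, if_neg hx, Finset.sum_mul]
      exact Finset.sum_congr rfl fun w _ => by ring

lemma kit_rev {π : V → ℝ} (hrev : ∀ a b, π a * P a b = π b * P b a) :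
    ∀ (n : ℕ) (x v : V), x ∉ k → v ∉ k →
      π x * kit P k (dd v) n x = π v * kit P k (dd x) n v := by
  intro n
  induction n with
  | zero =>
    intro x v hx hv
    by_cases hxv : x = v
    · subst hxv; rfl
    · have hvx : v ≠ x := fun h => hxv h.symm
      simp [kit_zero, dd, hxv, hvx]
  | succ n ih =>
    intro x v hx hv
    rw [kit_backpeel n x v]
    rw [show kit P k (dd x) (n + 1) v = ∑ u, P v u * kit P k (dd x) n u from by
      rw [kit_succ, if_neg hv]]
    rw [Finset.mul_sum, Finset.mul_sum]
    refine Finset.sum_congr rfl fun u _ => ?_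
    by_cases hu : u ∈ k
    · have hxu : x ≠ u := fun h => hx (h ▸ hu)
      rw [if_pos hu, kit_dd_mem_zero' hu hxu n]
      ring
    · rw [if_neg hu]
      have h1 := ih x u hx hu
      have h2 := hrev u v
      linear_combination P u v * h1 + kit P k (dd x) n u * h2

lemma M_symm {π : V → ℝ} (hrev : ∀ a b, π a * P a b = π b * P b a) :
    ∀ (n : ℕ) (a b : V),
      π a * ∑ u, P a u * kit P k (dd b) n u = π b * ∑ u, P b u * kit P k (dd a) n u := by
  have expand : ∀ (n : ℕ) (c d : V), π c * ∑ u, P c u * kit P k (dd d) (n + 1) u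
      = ∑ u, (if u ∈ k then 0 else (π c * P c u) * (∑ w, P u w * kit P k (dd d) n w)) := by
    intro n c d
    rw [Finset.mul_sum]
    refine Finset.sum_congr rfl fun u _ => ?_
    rw [kit_succ]
    by_cases hu : u ∈ k
    · rw [if_pos hu, if_pos hu]; ring
    · rw [if_neg hu, if_neg hu]; ring
  intro n
  induction n with
  | zero =>
    intro a b
    have h : ∀ (c d : V), ∑ u, P c u * kit P k (dd d) 0 u = P c d := by
      intro c d
      simp only [kit_zero, dd]
      rw [Finset.sum_congr rfl fun u _ => show P c u * (if u = d then (1:ℝ) else 0)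
          = if u = d then P c u else 0 from by by_cases h : u = d <;> simp [h]]
      rw [Finset.sum_ite_eq' Finset.univ d fun u => P c u]
      simp
    rw [h, h]
    exact hrev a b
  | succ n ih =>
    intro a b
    rw [expand n a b, expand n b a]
    have middle : ∑ u, (if u ∈ k then 0 else (π a * P a u) * (∑ w, P u w * kit P k (dd b) n w))
        = ∑ u, (if u ∈ k then 0 else P u a * (π b * ∑ w, P b w * kit P k (dd u) n w)) := by
      refine Finset.sum_congr rfl fun u _ => ?_
      by_cases hu : u ∈ k
      · rw [if_pos hu, if_pos hu]
      · rw [if_neg hu, if_neg hu]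
        have h1 := hrev a u
        have h2 := ih u b
        linear_combination (∑ w, P u w * kit P k (dd b) n w) * h1 + P u a * h2
    rw [middle]
    have key : ∑ u, (if u ∈ k then 0 else P u a * (π b * ∑ w, P b w * kit P k (dd u) n w))
        = ∑ u, (if u ∈ k then 0 else (π b * P b u) * (∑ w, P u w * kit P k (dd a) n w)) := by
      calc ∑ u, (if u ∈ k then 0 else P u a * (π b * ∑ w, P b w * kit P k (dd u) n w))
          = ∑ u, ∑ w, π b * (P b w * (kit P k (dd u) n w * (if u ∈ k then 0 else P u a))) := by
            refine Finset.sum_congr rfl fun u _ => ?_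
            by_cases hu : u ∈ k
            · rw [if_pos hu]
              symm
              refine Finset.sum_eq_zero fun w _ => by rw [if_pos hu]; ring
            · rw [if_neg hu, Finset.mul_sum, Finset.mul_sum]
              refine Finset.sum_congr rfl fun w _ => by rw [if_neg hu]; ring
        _ = ∑ w, ∑ u, π b * (P b w * (kit P k (dd u) n w * (if u ∈ k then 0 else P u a))) :=
            Finset.sum_comm
        _ = ∑ w, π b * (P b w * kit P k (dd a) (n + 1) w) := by
            refine Finset.sum_congr rfl fun w _ => ?_
            rw [kit_backpeel n w a, Finset.mul_sum, Finset.mul_sum]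
        _ = ∑ u, (if u ∈ k then 0 else (π b * P b u) * (∑ w, P u w * kit P k (dd a) n w)) := by
            refine Finset.sum_congr rfl fun w _ => ?_
            rw [kit_succ]
            by_cases hw : w ∈ k
            · rw [if_pos hw, if_pos hw]; ring
            · rw [if_neg hw, if_neg hw]; ring
    rw [key]


/-! ### Main probabilistic quantities -/

/-- Expected visits `G_y(v,x)`: expected number of visits to `x` before hitting `y`. -/
def vis (P : V → V → ℝ) (x y v : V) : ℝ := ∑' n, kit P {y} (dd x) n v

/-- `P_v[T_x < T_y]`. -/
def fp (P : V → V → ℝ) (x y v : V) : ℝ := ∑' n, kit P (insert x {y}) (dd x) n v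

/-- `P_v[T_y < T_x]`. -/
def fq (P : V → V → ℝ) (x y v : V) : ℝ := ∑' n, kit P (insert x {y}) (dd y) n v

/-- Escape probability from `x` to `y`. -/
def esc (P : V → V → ℝ) (x y : V) : ℝ :=
  ∑' n, ∑ u, P x u * kit P (insert x {y}) (dd y) n u

/-- Expected hitting time `E_v[T_y]`. -/
def ht (P : V → V → ℝ) (y v : V) : ℝ := ∑' n, kit P {y} (sOne y) n v

section Ident

lemma vis_pointwise {x y : V} (hxy : x ≠ y) (n : ℕ) (v : V) :
    kit P {y} (dd x) n v = ∑ m ∈ Finset.range (n + 1),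
      kit P (insert x {y}) (dd x) m v * kit P {y} (dd x) (n - m) x := by
  have hbk : x ∉ ({y} : Finset V) := by simp [hxy]
  have hzero : (fun u => if u = x then (0:ℝ) else dd x u) = fun _ => (0:ℝ) := by
    funext u
    by_cases h : u = x <;> simp [dd, h]
  have h := kit_insert (P := P) (k := {y}) (b := x) hbk (dd x) n v
  rwa [hzero, kit_zero_f n v, zero_add] at h

lemma vis_eq (hP0 : ∀ v u, 0 ≤ P v u) (hP1 : ∀ v, ∑ u, P v u = 1) {x y : V} (hdy : Dec P {y}) (hxy : x ≠ y) (v : V) :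
    vis P x y v = fp P x y v * vis P x y x := by
  have hdk := hdy.mono hP0 (Finset.subset_insert x {y})
  unfold vis fp
  rw [tsum_congr (vis_pointwise hxy · v)]
  exact tsum_cauchy (hdk.summable hP0 (dd_nonneg x) (dd_le_one x) v)
    (hdy.summable hP0 (dd_nonneg x) (dd_le_one x) x)
    (fun n => kit_nonneg hP0 (dd_nonneg x) n v)
    (fun n => kit_nonneg hP0 (dd_nonneg x) n x)

lemma vis_renewal (hP0 : ∀ v u, 0 ≤ P v u) (hP1 : ∀ v, ∑ u, P v u = 1) {x y : V} (hdy : Dec P {y}) (hxy : x ≠ y) :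
    vis P x y x - 1 = (∑ u, P x u * fp P x y u) * vis P x y x := by
  have hbk : x ∉ ({y} : Finset V) := by simp [hxy]
  have hdk := hdy.mono hP0 (Finset.subset_insert x {y})
  have hsumu : ∀ u, Summable fun m => P x u * kit P (insert x {y}) (dd x) m u :=
    fun u => (hdk.summable hP0 (dd_nonneg x) (dd_le_one x) u).mul_left (P x u)
  have hsumρ : Summable fun m => ∑ u, P x u * kit P (insert x {y}) (dd x) m u :=
    summable_sum fun u _ => hsumu u
  have hsumc : Summable fun n => kit P {y} (dd x) n x :=
    hdy.summable hP0 (dd_nonneg x) (dd_le_one x) x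
  have hrec : ∀ n, kit P {y} (dd x) (n + 1) x = ∑ m ∈ Finset.range (n + 1),
      (∑ u, P x u * kit P (insert x {y}) (dd x) m u) * kit P {y} (dd x) (n - m) x := by
    intro n
    rw [kit_succ, if_neg hbk]
    rw [Finset.sum_congr rfl fun u _ => by rw [vis_pointwise hxy n u, Finset.mul_sum]]
    rw [Finset.sum_comm]
    refine Finset.sum_congr rfl fun m _ => ?_
    rw [Finset.sum_mul]
    exact Finset.sum_congr rfl fun u _ => by ring
  have h1 : ∑' n : ℕ, kit P {y} (dd x) (n + 1) x
      = (∑' m, ∑ u, P x u * kit P (insert x {y}) (dd x) m u) * vis P x y x := by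
    rw [tsum_congr hrec]
    exact tsum_cauchy hsumρ hsumc
      (fun m => Finset.sum_nonneg fun u _ =>
        mul_nonneg (hP0 x u) (kit_nonneg hP0 (dd_nonneg x) m u))
      (fun n => kit_nonneg hP0 (dd_nonneg x) n x)
  have h2 : vis P x y x = 1 + ∑' n : ℕ, kit P {y} (dd x) (n + 1) x := by
    unfold vis
    rw [Summable.tsum_eq_zero_add hsumc]
    simp [kit_zero, dd]
  have h3 : (∑' m, ∑ u, P x u * kit P (insert x {y}) (dd x) m u)
      = ∑ u, P x u * fp P x y u := by
    rw [Summable.tsum_finsetSum fun u _ => hsumu u]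
    exact Finset.sum_congr rfl fun u _ => tsum_mul_left
  rw [h3] at h1
  linarith [h1, h2]

lemma fp_add_fq (hP0 : ∀ v u, 0 ≤ P v u) (hP1 : ∀ v, ∑ u, P v u = 1) {x y : V} (hdy : Dec P {y}) (hxy : x ≠ y) (v : V) :
    fp P x y v + fq P x y v = 1 := by
  have hdk := hdy.mono hP0 (Finset.subset_insert x {y})
  have hsplit : ∀ n w, kit P (insert x {y}) (fun u => dd x u + dd y u) n w
      = kit P (insert x {y}) (fun _ => (1:ℝ)) n w
        - kit P (insert x {y}) (fun _ => (1:ℝ)) (n + 1) w := by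
    intro n w
    have hone : (fun _ : V => (1:ℝ)) = fun u => (dd x u + dd y u) +
        (if u ∈ insert x ({y} : Finset V) then 0 else 1) := by
      funext u
      by_cases hux : u = x
      · simp [dd, hux, hxy]
      · by_cases huy : u = y
        · simp [dd, hux, huy, Ne.symm hxy]
        · simp [dd, hux, huy]
    have h1 : kit P (insert x {y}) (fun _ => (1:ℝ)) n w
        = kit P (insert x {y}) (fun u => dd x u + dd y u) n w +
          kit P (insert x {y}) (fun u => if u ∈ insert x ({y} : Finset V) then 0 else 1) n w := by
      rw [show (fun _ : V => (1:ℝ)) = _ from hone]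
      exact kit_add _ _ n w
    have h2 : kit P (insert x {y}) (fun _ => (1:ℝ)) (n + 1) w
        = kit P (insert x {y}) (fun u => if u ∈ insert x ({y} : Finset V) then 0 else 1) n w := by
      rw [kit_one_succ hP1 n]
    linarith [h1, h2]
  have htel : ∀ N w, ∑ n ∈ Finset.range N, kit P (insert x {y}) (fun u => dd x u + dd y u) n w
      = 1 - kit P (insert x {y}) (fun _ => (1:ℝ)) N w := by
    intro N w
    rw [Finset.sum_congr rfl fun n _ => hsplit n w,
      Finset.sum_range_sub' (fun n => kit P (insert x {y}) (fun _ => (1:ℝ)) n w) N]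
    simp [kit_zero]
  have hH : HasSum (fun n => kit P (insert x {y}) (fun u => dd x u + dd y u) n v) 1 := by
    rw [hasSum_iff_tendsto_nat_of_nonneg
      (fun n => kit_nonneg hP0 (fun u => add_nonneg (dd_nonneg x u) (dd_nonneg y u)) n v) 1]
    have hz := hdk.tendsto_zero hP0 (fun _ => zero_le_one) (fun _ => le_refl 1) v
    have h2 : Filter.Tendsto (fun N => 1 - kit P (insert x {y}) (fun _ => (1:ℝ)) N v)
        Filter.atTop (nhds (1 - 0)) := Filter.Tendsto.sub tendsto_const_nhds hz
    rw [sub_zero] at h2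
    exact h2.congr fun N => (htel N v).symm
  calc fp P x y v + fq P x y v
      = ∑' n : ℕ, (kit P (insert x {y}) (dd x) n v + kit P (insert x {y}) (dd y) n v) :=
        (Summable.tsum_add (hdk.summable hP0 (dd_nonneg x) (dd_le_one x) v)
          (hdk.summable hP0 (dd_nonneg y) (dd_le_one y) v)).symm
    _ = ∑' n : ℕ, kit P (insert x {y}) (fun u => dd x u + dd y u) n v :=
        tsum_congr fun n => (kit_add (dd x) (dd y) n v).symm
    _ = 1 := hH.tsum_eq

lemma esc_eq (hP0 : ∀ v u, 0 ≤ P v u) (hP1 : ∀ v, ∑ u, P v u = 1) {x y : V} (hdy : Dec P {y}) (hxy : x ≠ y) :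
    esc P x y = 1 - ∑ u, P x u * fp P x y u := by
  have hdk := hdy.mono hP0 (Finset.subset_insert x {y})
  have hsumu : ∀ u, Summable fun m => P x u * kit P (insert x {y}) (dd y) m u :=
    fun u => (hdk.summable hP0 (dd_nonneg y) (dd_le_one y) u).mul_left (P x u)
  unfold esc
  rw [Summable.tsum_finsetSum fun u _ => hsumu u]
  have h1 : ∀ u, ∑' n, P x u * kit P (insert x {y}) (dd y) n u = P x u * fq P x y u :=
    fun u => tsum_mul_left
  rw [Finset.sum_congr rfl fun u _ => h1 u]
  have h2 : ∀ u, P x u * fq P x y u = P x u - P x u * fp P x y u := by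
    intro u
    have := fp_add_fq hP0 hP1 hdy hxy u
    linear_combination P x u * this
  rw [Finset.sum_congr rfl fun u _ => h2 u, Finset.sum_sub_distrib, hP1 x]

lemma vis_ge_one (hP0 : ∀ v u, 0 ≤ P v u) (hP1 : ∀ v, ∑ u, P v u = 1) {x y : V} (hdy : Dec P {y}) : 1 ≤ vis P x y x := by
  have h := Summable.le_tsum (hdy.summable hP0 (dd_nonneg x) (dd_le_one x) x) 0
    (fun j _ => kit_nonneg hP0 (dd_nonneg x) j x)
  simpa [kit_zero, dd, vis] using h

lemma esc_mul_vis (hP0 : ∀ v u, 0 ≤ P v u) (hP1 : ∀ v, ∑ u, P v u = 1) {x y : V} (hdy : Dec P {y}) (hxy : x ≠ y) :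
    esc P x y * vis P x y x = 1 := by
  have h1 := vis_renewal hP0 hP1 hdy hxy
  have h2 := esc_eq hP0 hP1 hdy hxy
  linear_combination vis P x y x * h2 + h1

lemma esc_pos (hP0 : ∀ v u, 0 ≤ P v u) (hP1 : ∀ v, ∑ u, P v u = 1) {x y : V} (hdy : Dec P {y}) (hxy : x ≠ y) : 0 < esc P x y := by
  have h1 := esc_mul_vis hP0 hP1 hdy hxy
  have h2 := vis_ge_one hP0 hP1 hdy (x := x) (y := y)
  nlinarith

lemma vis_rev {π : V → ℝ} (hrev : ∀ a b, π a * P a b = π b * P b a)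
    {x y v : V} (hxy : x ≠ y) (hvy : v ≠ y) :
    π x * vis P v y x = π v * vis P x y v := by
  unfold vis
  rw [← tsum_mul_left, ← tsum_mul_left]
  refine tsum_congr fun n => ?_
  exact kit_rev hrev n x v (by simp [hxy]) (by simp [hvy])

lemma esc_symm {π : V → ℝ} (hrev : ∀ a b, π a * P a b = π b * P b a) (x y : V) :
    π x * esc P x y = π y * esc P y x := by
  have hpair : insert y ({x} : Finset V) = insert x ({y} : Finset V) := by
    ext u
    simp [or_comm]
  unfold esc
  simp only [hpair]
  rw [← tsum_mul_left, ← tsum_mul_left]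
  exact tsum_congr fun n => M_symm hrev n x y

lemma ht_nonneg (hP0 : ∀ v u, 0 ≤ P v u) (y v : V) : 0 ≤ ht P y v :=
  tsum_nonneg fun n => kit_nonneg hP0 (sOne_nonneg y) n v

lemma ht_self (y : V) : ht P y y = 0 := by
  unfold ht
  have h : ∀ n : ℕ, kit P {y} (sOne y) n y = 0 := by
    intro n
    cases n with
    | zero => simp [kit_zero, sOne]
    | succ n => rw [kit_succ, if_pos (Finset.mem_singleton_self y)]
  rw [tsum_congr h]
  exact tsum_zero

lemma ht_triangle (hP0 : ∀ v u, 0 ≤ P v u) (hP1 : ∀ v, ∑ u, P v u = 1) {z : V} (hdz : Dec P {z}) (hdw : ∀ w : V, Dec P {w}) (w v : V) :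
    ht P z v ≤ ht P w v + ht P z w := by
  by_cases hwz : w = z
  · subst hwz
    rw [ht_self]
    simp
  · have hb : w ∉ ({z} : Finset V) := by simp [hwz]
    have hdk := hdz.mono hP0 (Finset.subset_insert w {z})
    have hf'0 : ∀ u, 0 ≤ (if u = w then (0:ℝ) else sOne z u) := by
      intro u
      split
      · exact le_refl 0
      · exact sOne_nonneg z u
    have hf'1 : ∀ u, (if u = w then (0:ℝ) else sOne z u) ≤ 1 := by
      intro u
      split
      · exact zero_le_one
      · exact sOne_le_one z u
    have hdec := kit_insert (P := P) (k := {z}) (b := w) hb (sOne z)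
    have hA : Summable fun n =>
        kit P (insert w {z}) (fun u => if u = w then 0 else sOne z u) n v :=
      hdk.summable hP0 hf'0 hf'1 v
    have hBa : Summable fun n => kit P (insert w {z}) (dd w) n v :=
      hdk.summable hP0 (dd_nonneg w) (dd_le_one w) v
    have hBb : Summable fun n => kit P {z} (sOne z) n w :=
      hdz.summable hP0 (sOne_nonneg z) (sOne_le_one z) w
    have hBan : Summable fun n => ‖kit P (insert w {z}) (dd w) n v‖ :=
      hBa.congr fun n => by
        rw [Real.norm_eq_abs, abs_of_nonneg (kit_nonneg hP0 (dd_nonneg w) n v)]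
    have hBbn : Summable fun n => ‖kit P {z} (sOne z) n w‖ :=
      hBb.congr fun n => by
        rw [Real.norm_eq_abs, abs_of_nonneg (kit_nonneg hP0 (sOne_nonneg z) n w)]
    have hB : Summable fun n => ∑ m ∈ Finset.range (n + 1),
        kit P (insert w {z}) (dd w) m v * kit P {z} (sOne z) (n - m) w :=
      (summable_norm_sum_mul_range_of_summable_norm hBan hBbn).of_norm
    have hsum : ht P z v = (∑' n, kit P (insert w {z})
        (fun u => if u = w then 0 else sOne z u) n v) +
        (∑' n, kit P (insert w {z}) (dd w) n v) * ht P z w := by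
      unfold ht
      rw [tsum_congr fun n => hdec n v, Summable.tsum_add hA hB]
      congr 1
      exact tsum_cauchy hBa hBb (fun n => kit_nonneg hP0 (dd_nonneg w) n v)
        (fun n => kit_nonneg hP0 (sOne_nonneg z) n w)
    rw [hsum]
    have hpart1 : (∑' n, kit P (insert w {z})
        (fun u => if u = w then 0 else sOne z u) n v) ≤ ht P w v := by
      refine Summable.tsum_le_tsum (fun n => ?_) hA
        ((hdw w).summable hP0 (sOne_nonneg w) (sOne_le_one w) v)
      calc kit P (insert w {z}) (fun u => if u = w then 0 else sOne z u) n v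
          ≤ kit P {w} (fun u => if u = w then 0 else sOne z u) n v :=
            kit_mono_k hP0 hf'0 (Finset.singleton_subset_iff.mpr
              (Finset.mem_insert_self w {z})) n v
        _ ≤ kit P {w} (sOne w) n v := by
            refine kit_mono_f hP0 (fun u => ?_) n v
            by_cases hu : u = w
            · simp [hu, sOne]
            · rw [if_neg hu, show sOne w u = 1 from by simp [sOne, hu]]
              exact sOne_le_one z u
    have hpart2 : (∑' n, kit P (insert w {z}) (dd w) n v) * ht P z w ≤ ht P z w := by
      have h1 := tsum_dd_le_one hP0 hP1 hdk (Finset.mem_insert_self w {z}) v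
      have h2 := ht_nonneg hP0 z w
      nlinarith
    linarith

lemma ht_eq_sum_vis (hP0 : ∀ v u, 0 ≤ P v u) {y : V} (hdy : Dec P {y}) (x : V) :
    ht P y x = ∑ v ∈ Finset.univ.erase y, vis P v y x := by
  unfold ht vis
  have hfun : sOne y = fun u => ∑ v ∈ Finset.univ.erase y, dd v u := by
    funext u
    by_cases hu : u = y
    · rw [hu]
      symm
      rw [show sOne y y = 0 from by simp [sOne]]
      refine Finset.sum_eq_zero fun v hv => ?_
      have : y ≠ v := fun h => (Finset.ne_of_mem_erase hv) h.symm
      simp [dd, this]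
    · rw [show sOne y u = 1 from by simp [sOne, hu]]
      symm
      rw [Finset.sum_congr rfl fun v _ => show dd v u = if u = v then (1:ℝ) else 0 from rfl]
      rw [Finset.sum_ite_eq (Finset.univ.erase y) u (fun _ => (1:ℝ))]
      simp [hu]
  have hrepr : ∀ n, kit P {y} (sOne y) n x
      = ∑ v ∈ Finset.univ.erase y, kit P {y} (dd v) n x := by
    intro n
    rw [show sOne y = _ from hfun]
    exact kit_sum _ _ n x
  rw [tsum_congr hrepr]
  exact Summable.tsum_finsetSum fun v _ => hdy.summable hP0 (dd_nonneg v) (dd_le_one v) x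

end Ident


/-! ### Commute time formula and second moment bound -/

lemma fp_at_target {x y : V} (hxy : x ≠ y) : fp P x y y = 0 := by
  unfold fp
  rw [tsum_congr fun n => kit_dd_mem_zero'
    (Finset.mem_insert_of_mem (Finset.mem_singleton_self y)) hxy n]
  exact tsum_zero

lemma commute_formula (hP0 : ∀ v u, 0 ≤ P v u) (hP1 : ∀ v, ∑ u, P v u = 1)
    {π : V → ℝ} (hrev : ∀ a b, π a * P a b = π b * P b a)
    {x y : V} (hxy : x ≠ y) (hdx : Dec P {x}) (hdy : Dec P {y}) :
    (π x * esc P x y) * (ht P y x + ht P x y) = ∑ v, π v := by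
  have key : ∀ (a b : V), a ≠ b → Dec P {b} →
      (π a * esc P a b) * ht P b a = ∑ v, π v * fp P a b v := by
    intro a b hab hdb
    have h1 : π a * ht P b a
        = ∑ v ∈ Finset.univ.erase b, π v * (fp P a b v * vis P a b a) := by
      rw [ht_eq_sum_vis hP0 hdb a, Finset.mul_sum]
      refine Finset.sum_congr rfl fun v hv => ?_
      have hvb : v ≠ b := Finset.ne_of_mem_erase hv
      rw [vis_rev hrev hab hvb, vis_eq hP0 hP1 hdb hab v]
    have h2 : (π a * esc P a b) * ht P b a
        = ∑ v ∈ Finset.univ.erase b, π v * fp P a b v := by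
      calc (π a * esc P a b) * ht P b a = esc P a b * (π a * ht P b a) := by ring
        _ = ∑ v ∈ Finset.univ.erase b, esc P a b * (π v * (fp P a b v * vis P a b a)) := by
            rw [h1, Finset.mul_sum]
        _ = ∑ v ∈ Finset.univ.erase b, π v * fp P a b v := by
            refine Finset.sum_congr rfl fun v _ => ?_
            have h3 := esc_mul_vis hP0 hP1 hdb hab
            linear_combination (π v * fp P a b v) * h3
    rw [h2]
    exact Finset.sum_erase _ (by rw [fp_at_target hab, mul_zero])
  have k1 := key x y hxy hdy
  have k2 := key y x hxy.symm hdx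
  have hpair : insert y ({x} : Finset V) = insert x ({y} : Finset V) := by
    ext u
    simp [or_comm]
  have hfq : ∀ v, fp P y x v = fq P x y v := by
    intro v
    unfold fp fq
    simp only [hpair]
  have hsym := esc_symm (P := P) (π := π) hrev x y
  have hx2 : (π x * esc P x y) * ht P x y = ∑ v, π v * fq P x y v := by
    calc (π x * esc P x y) * ht P x y = (π y * esc P y x) * ht P x y := by rw [hsym]
      _ = ∑ v, π v * fp P y x v := k2
      _ = ∑ v, π v * fq P x y v := Finset.sum_congr rfl fun v _ => by rw [hfq v]
  calc (π x * esc P x y) * (ht P y x + ht P x y)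
      = (π x * esc P x y) * ht P y x + (π x * esc P x y) * ht P x y := by ring
    _ = (∑ v, π v * fp P x y v) + ∑ v, π v * fq P x y v := by rw [k1, hx2]
    _ = ∑ v, (π v * fp P x y v + π v * fq P x y v) := by rw [Finset.sum_add_distrib]
    _ = ∑ v, π v := by
        refine Finset.sum_congr rfl fun v _ => ?_
        have := fp_add_fq hP0 hP1 hdy hxy v
        linear_combination π v * this

lemma tsum_mul_surv_le (hP0 : ∀ v u, 0 ≤ P v u) (hP1 : ∀ v, ∑ u, P v u = 1)
    {y : V} (hdy : Dec P {y}) {M : ℝ} (hM : ∀ w, ht P y w ≤ M) (v : V) :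
    ∑' m : ℕ, (m:ℝ) * kit P {y} (sOne y) m v ≤ M * ht P y v := by
  have htail : ∀ m : ℕ, ∑' j : ℕ, kit P {y} (sOne y) (j + (m + 1)) v
      = ∑ u, kit P {y} (dd u) (m + 1) v * ht P y u := by
    intro m
    have hshift : ∀ j, kit P {y} (sOne y) (j + (m + 1)) v
        = ∑ u, kit P {y} (dd u) (m + 1) v * kit P {y} (sOne y) j u := by
      intro j
      have h1 : kit P {y} (sOne y) ((m + 1) + j) = kit P {y} (kit P {y} (sOne y) j) (m + 1) :=
        kit_add_apply _ (m + 1) j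
      calc kit P {y} (sOne y) (j + (m + 1)) v = kit P {y} (sOne y) ((m + 1) + j) v := by
            rw [add_comm]
        _ = kit P {y} (kit P {y} (sOne y) j) (m + 1) v := by rw [h1]
        _ = ∑ u, kit P {y} (dd u) (m + 1) v * kit P {y} (sOne y) j u := kit_repr _ _ _
    rw [tsum_congr hshift, Summable.tsum_finsetSum (fun u _ =>
      (hdy.summable hP0 (sOne_nonneg y) (sOne_le_one y) u).mul_left _)]
    exact Finset.sum_congr rfl fun u _ => tsum_mul_left
  have hone : ∀ m, ∑ u, kit P {y} (dd u) (m + 1) v = kit P {y} (sOne y) m v := by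
    intro m
    have h2 : kit P {y} (fun _ => (1:ℝ)) (m + 1) v = kit P {y} (sOne y) m v := by
      rw [kit_one_succ hP1 m]
      congr 1
      funext u
      simp [sOne]
    calc ∑ u, kit P {y} (dd u) (m + 1) v = ∑ u, kit P {y} (dd u) (m + 1) v * 1 := by simp
      _ = kit P {y} (fun _ => (1:ℝ)) (m + 1) v := (kit_repr _ _ _).symm
      _ = kit P {y} (sOne y) m v := h2
  have htb : ∀ m, ∑' j : ℕ, kit P {y} (sOne y) (j + (m + 1)) v
      ≤ M * kit P {y} (sOne y) m v := by
    intro m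
    rw [htail m]
    calc ∑ u, kit P {y} (dd u) (m + 1) v * ht P y u
        ≤ ∑ u, kit P {y} (dd u) (m + 1) v * M :=
          Finset.sum_le_sum fun u _ =>
            mul_le_mul_of_nonneg_left (hM u) (kit_nonneg hP0 (dd_nonneg u) _ v)
      _ = M * ∑ u, kit P {y} (dd u) (m + 1) v := by rw [← Finset.sum_mul, mul_comm]
      _ = M * kit P {y} (sOne y) m v := by rw [hone m]
  have hmain : ∑' n : ℕ, (n:ℝ) * kit P {y} (sOne y) n v
      = ∑' m : ℕ, (1:ℝ) * ∑' j : ℕ, kit P {y} (sOne y) (j + (m + 1)) v := by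
    calc ∑' n : ℕ, (n:ℝ) * kit P {y} (sOne y) n v
        = ∑' n : ℕ, (∑ m ∈ Finset.range n, (1:ℝ)) * kit P {y} (sOne y) n v :=
          tsum_congr fun n => by simp
      _ = ∑' m : ℕ, (1:ℝ) * ∑' j : ℕ, kit P {y} (sOne y) (j + (m + 1)) v :=
          tsum_weighted_tail (fun _ => zero_le_one)
            (fun n => kit_nonneg hP0 (sOne_nonneg y) n v)
            (hdy.summable hP0 (sOne_nonneg y) (sOne_le_one y) v)
            ((hdy.summable_pow hP0 (sOne_nonneg y) (sOne_le_one y) 1 v).congr fun n => by simp)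
  rw [hmain]
  have hsum_rhs : Summable fun m => M * kit P {y} (sOne y) m v :=
    (hdy.summable hP0 (sOne_nonneg y) (sOne_le_one y) v).mul_left M
  have hsum_lhs : Summable fun m : ℕ => (1:ℝ) * ∑' j : ℕ, kit P {y} (sOne y) (j + (m + 1)) v := by
    refine Summable.of_nonneg_of_le (fun m => ?_) (fun m => ?_) hsum_rhs
    · rw [one_mul]
      exact tsum_nonneg fun j => kit_nonneg hP0 (sOne_nonneg y) _ v
    · rw [one_mul]
      exact htb m
  calc ∑' m : ℕ, (1:ℝ) * ∑' j : ℕ, kit P {y} (sOne y) (j + (m + 1)) v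
      ≤ ∑' m : ℕ, M * kit P {y} (sOne y) m v :=
        Summable.tsum_le_tsum (fun m => by rw [one_mul]; exact htb m) hsum_lhs hsum_rhs
    _ = M * ht P y v := tsum_mul_left

lemma sq_moment_le (hP0 : ∀ v u, 0 ≤ P v u) (hP1 : ∀ v, ∑ u, P v u = 1)
    {y : V} (hdy : Dec P {y}) {M : ℝ} (hM : ∀ w, ht P y w ≤ M) (v : V) :
    ∑' n : ℕ, (n:ℝ) ^ 2 * kit P {y} (dd y) n v ≤ (2 * M + 1) * ht P y v := by
  have hw : ∀ n : ℕ, ∑ m ∈ Finset.range n, (2 * (m:ℝ) + 1) = (n:ℝ) ^ 2 := by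
    intro n
    induction n with
    | zero => simp
    | succ n ih =>
      rw [Finset.sum_range_succ, ih]
      push_cast
      ring
  have hs : Summable fun n : ℕ =>
      (∑ m ∈ Finset.range n, (2 * (m:ℝ) + 1)) * kit P {y} (dd y) n v :=
    (hdy.summable_pow hP0 (dd_nonneg y) (dd_le_one y) 2 v).congr fun n => by rw [hw n]
  have h1 : ∑' n : ℕ, (n:ℝ) ^ 2 * kit P {y} (dd y) n v
      = ∑' m : ℕ, (2 * (m:ℝ) + 1) * kit P {y} (sOne y) m v := by
    calc ∑' n : ℕ, (n:ℝ) ^ 2 * kit P {y} (dd y) n v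
        = ∑' n : ℕ, (∑ m ∈ Finset.range n, (2 * (m:ℝ) + 1)) * kit P {y} (dd y) n v :=
          tsum_congr fun n => by rw [hw n]
      _ = ∑' m : ℕ, (2 * (m:ℝ) + 1) * kit P {y} (sOne y) m v :=
          moment_eq hP0 hP1 hdy (fun m => by positivity) hs
  rw [h1]
  have hsm : Summable fun m : ℕ => (m:ℝ) * kit P {y} (sOne y) m v :=
    (hdy.summable_pow hP0 (sOne_nonneg y) (sOne_le_one y) 1 v).congr fun n => by rw [pow_one]
  have hss : Summable fun m : ℕ => kit P {y} (sOne y) m v :=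
    hdy.summable hP0 (sOne_nonneg y) (sOne_le_one y) v
  have hsplit : ∑' m : ℕ, (2 * (m:ℝ) + 1) * kit P {y} (sOne y) m v
      = 2 * (∑' m : ℕ, (m:ℝ) * kit P {y} (sOne y) m v) + ht P y v := by
    calc ∑' m : ℕ, (2 * (m:ℝ) + 1) * kit P {y} (sOne y) m v
        = ∑' m : ℕ, (2 * ((m:ℝ) * kit P {y} (sOne y) m v) + kit P {y} (sOne y) m v) :=
          tsum_congr fun m => by ring
      _ = (∑' m : ℕ, 2 * ((m:ℝ) * kit P {y} (sOne y) m v)) + ∑' m, kit P {y} (sOne y) m v :=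
          Summable.tsum_add (hsm.mul_left 2) hss
      _ = 2 * (∑' m : ℕ, (m:ℝ) * kit P {y} (sOne y) m v) + ht P y v := by
          rw [tsum_mul_left]
          rfl
  rw [hsplit]
  have hb := tsum_mul_surv_le hP0 hP1 hdy hM v
  have hnn := ht_nonneg hP0 y v
  linarith

end CTB


open CTB in
/-- **Second-moment commute time bound for simple random walk.** -/
theorem commute_time_second_moment_bound {V : Type*} [Fintype V] [DecidableEq V]
    (G : SimpleGraph V) [DecidableRel G.Adj] (hconn : G.Connected) (x y : V) (hxy : x ≠ y) :
    hitMoment (fun a b => if G.Adj a b then (1 : ℝ) else 0) x y 2 +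
        hitMoment (fun a b => if G.Adj a b then (1 : ℝ) else 0) y x 2 ≤
      16 * (G.edgeFinset.card : ℝ) ^ 2 * (G.diam : ℝ) *
        Reff (fun a b => if G.Adj a b then (1 : ℝ) else 0) x y := by
  classical
  haveI hnt : Nontrivial V := ⟨⟨x, y, hxy⟩⟩
  haveI hnev : Nonempty V := ⟨x⟩
  set c : V → V → ℝ := fun a b => if G.Adj a b then (1 : ℝ) else 0 with hc
  -- degrees and stationary measure
  have hdegpos : ∀ v : V, 0 < G.degree v := by
    intro v
    obtain ⟨u, hu⟩ : ∃ u : V, u ≠ v := exists_ne v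
    obtain ⟨p⟩ := hconn.preconnected v u
    cases p with
    | nil => exact absurd rfl hu
    | @cons _ w _ h q =>
      have hmem : w ∈ G.neighborFinset v := by
        rw [SimpleGraph.mem_neighborFinset]
        exact h
      exact Finset.card_pos.mpr ⟨w, hmem⟩
  have hπdeg : ∀ v : V, netPi c v = (G.degree v : ℝ) := by
    intro v
    unfold netPi
    rw [hc]
    simp only [Finset.sum_boole]
    congr 1
    rw [← SimpleGraph.neighborFinset_eq_filter]
    rfl
  have hπpos : ∀ v : V, 0 < netPi c v := by
    intro v
    rw [hπdeg v]
    exact_mod_cast hdegpos v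
  have hc0 : ∀ a b : V, 0 ≤ c a b := by
    intro a b
    rw [hc]
    dsimp only
    split <;> norm_num
  have hcsymm : ∀ a b : V, c a b = c b a := by
    intro a b
    rw [hc]
    dsimp only
    by_cases h : G.Adj a b
    · rw [if_pos h, if_pos h.symm]
    · rw [if_neg h, if_neg fun h' => h h'.symm]
  have hP0 : ∀ a b : V, 0 ≤ netStep c a b := fun a b => div_nonneg (hc0 a b) (hπpos a).le
  have hP1 : ∀ a : V, ∑ b, netStep c a b = 1 := by
    intro a
    unfold netStep
    rw [← Finset.sum_div]
    rw [show ∑ b, c a b = netPi c a from rfl]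
    exact div_self (hπpos a).ne'
  have hstep : ∀ a b : V, netPi c a * netStep c a b = c a b := by
    intro a b
    unfold netStep
    rw [mul_div_assoc']
    exact mul_div_cancel_left₀ _ (hπpos a).ne' 
  have hrev : ∀ a b : V, netPi c a * netStep c a b = netPi c b * netStep c b a := by
    intro a b
    rw [hstep a b, hstep b a]
    exact hcsymm a b
  have hPadj : ∀ a b : V, G.Adj a b → 0 < netStep c a b := by
    intro a b h
    unfold netStep
    apply div_pos ?_ (hπpos a)
    rw [hc]
    dsimp only
    rw [if_pos h]
    norm_num
  -- geometric decay for every target point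
  have hdec : ∀ z : V, Dec (netStep c) ({z} : Finset V) := by
    intro z
    refine dec_of_reach hP0 hP1 fun v => ?_
    obtain ⟨p⟩ := hconn.preconnected v z
    refine ⟨p.length + 1, ?_⟩
    induction p with
    | nil =>
      rw [kit_succ]
      split
      · norm_num
      · next hmem => exact absurd (Finset.mem_singleton_self _) hmem
    | cons h q ih =>
      rw [SimpleGraph.Walk.length_cons, kit_succ]
      split
      · norm_num
      · refine lt_of_lt_of_le (Finset.sum_lt_sum
          (fun u _ => mul_le_mul_of_nonneg_left
            (kit_le_one hP0 hP1 (fun _ => zero_le_one) (fun _ => le_refl 1) _ u) (hP0 _ u))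
          ⟨_, Finset.mem_univ _, mul_lt_mul_of_pos_left ih (hPadj _ _ h)⟩) ?_
        rw [Finset.sum_congr rfl fun u _ => mul_one (netStep c _ u)]
        rw [hP1]
  -- translations
  have hitPMF_eq : ∀ (b : V) (n : ℕ) (v : V),
      hitPMF c b n v = kit (netStep c) ({b} : Finset V) (dd b) n v := by
    intro b n
    induction n with
    | zero => intro v; rfl
    | succ n ih =>
      intro v
      by_cases hv : v = b
      · rw [show hitPMF c b (n + 1) v = 0 from by rw [hitPMF, if_pos hv],
          kit_succ, if_pos (by simp [hv])]
      · rw [show hitPMF c b (n + 1) v = ∑ u, netStep c v u * hitPMF c b n u from by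
            rw [hitPMF, if_neg hv],
          kit_succ, if_neg (by simp [hv])]
        exact Finset.sum_congr rfl fun u _ => by rw [ih u]
  have hesc_aux : ∀ (n : ℕ) (v : V),
      escapeAux c x y n v = kit (netStep c) (insert x ({y} : Finset V)) (dd y) n v := by
    intro n
    induction n with
    | zero => intro v; rfl
    | succ n ih =>
      intro v
      by_cases hvy : v = y
      · rw [show escapeAux c x y (n + 1) v = 0 from by rw [escapeAux, if_pos hvy],
          kit_succ, if_pos (by simp [hvy])]
      · by_cases hvx : v = x
        · rw [show escapeAux c x y (n + 1) v = 0 from by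
              rw [escapeAux, if_neg hvy, if_pos hvx],
            kit_succ, if_pos (by simp [hvx])]
        · rw [show escapeAux c x y (n + 1) v = ∑ u, netStep c v u * escapeAux c x y n u from by
              rw [escapeAux, if_neg hvy, if_neg hvx],
            kit_succ, if_neg (by simp [hvx, hvy])]
          exact Finset.sum_congr rfl fun u _ => by rw [ih u]
  have hescq : escapeProb c x y = esc (netStep c) x y := by
    unfold escapeProb esc
    exact tsum_congr fun n => Finset.sum_congr rfl fun u _ => by rw [hesc_aux n u]
  -- adjacent commute-time bound
  have hEn : (0:ℝ) ≤ ∑ v, netPi c v := Finset.sum_nonneg fun v _ => (hπpos v).le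
  have hadj : ∀ a b : V, G.Adj a b → ht (netStep c) b a ≤ ∑ v, netPi c v := by
    intro a b hab
    have habne : a ≠ b := G.ne_of_adj hab
    have hcf := commute_formula hP0 hP1 hrev habne (hdec a) (hdec b)
    have hdkab := (hdec b).mono hP0 (Finset.subset_insert a {b})
    have hterm0 : ∑ u, netStep c a u * kit (netStep c) (insert a ({b} : Finset V)) (dd b) 0 u
        = netStep c a b := by
      simp only [kit_zero, dd]
      rw [Finset.sum_congr rfl fun u _ => show netStep c a u * (if u = b then (1:ℝ) else 0)
          = if u = b then netStep c a u else 0 from by by_cases h : u = b <;> simp [h]]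
      rw [Finset.sum_ite_eq' Finset.univ b fun u => netStep c a u]
      simp
    have hescsum : Summable fun n =>
        ∑ u, netStep c a u * kit (netStep c) (insert a ({b} : Finset V)) (dd b) n u :=
      summable_sum fun u _ =>
        (hdkab.summable hP0 (dd_nonneg b) (dd_le_one b) u).mul_left _
    have hesc_lb : netStep c a b ≤ esc (netStep c) a b := by
      have h := Summable.le_tsum hescsum 0 fun j _ => Finset.sum_nonneg fun u _ =>
        mul_nonneg (hP0 a u) (kit_nonneg hP0 (dd_nonneg b) j u)
      rwa [hterm0] at h
    have h1e : (1:ℝ) ≤ netPi c a * esc (netStep c) a b := by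
      have h3 : c a b = 1 := by rw [hc]; dsimp only; rw [if_pos hab]
      calc (1:ℝ) = netPi c a * netStep c a b := by rw [hstep a b, h3]
        _ ≤ netPi c a * esc (netStep c) a b :=
            mul_le_mul_of_nonneg_left hesc_lb (hπpos a).le
    have hn1 := ht_nonneg hP0 b a
    have hn2 := ht_nonneg hP0 a b
    nlinarith [hcf, h1e, hn1, hn2,
      mul_nonneg (sub_nonneg.mpr h1e) (add_nonneg hn1 hn2)]
  -- walk bound
  have hwalk : ∀ (z v : V) (p : G.Walk v z),
      ht (netStep c) z v ≤ (∑ v, netPi c v) * p.length := by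
    intro z v p
    induction p with
    | nil =>
      rw [ht_self]
      simp
    | @cons a b' zz h q ih =>
      rw [SimpleGraph.Walk.length_cons]
      have htri := ht_triangle (z := zz) hP0 hP1 (hdec zz) hdec b' a
      have hadj' := hadj a b' h
      have hring : (∑ v, netPi c v) * ((q.length : ℝ) + 1)
          = (∑ v, netPi c v) * q.length + ∑ v, netPi c v := by ring
      push_cast
      linarith [ih]
  -- diameter bound
  have hede : G.ediam ≠ ⊤ := by
    obtain ⟨u, v, huv⟩ := G.exists_edist_eq_ediam_of_finite
    rw [← huv]
    exact SimpleGraph.edist_ne_top_iff_reachable.mpr (hconn.preconnected u v)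
  have hdiam0 : G.diam ≠ 0 := by
    intro h0
    rcases SimpleGraph.diam_eq_zero.mp h0 with h1 | h2
    · exact hede h1
    · exact (not_subsingleton V) h2
  have hM : ∀ z v : V, ht (netStep c) z v ≤ (∑ v, netPi c v) * (G.diam : ℝ) := by
    intro z v
    obtain ⟨p, hp⟩ := hconn.exists_walk_length_eq_dist v z
    have h1 := hwalk z v p
    have h2 : (p.length : ℝ) ≤ (G.diam : ℝ) := by
      rw [hp]
      exact_mod_cast SimpleGraph.dist_le_diam hede
    calc ht (netStep c) z v ≤ (∑ v, netPi c v) * p.length := h1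
      _ ≤ (∑ v, netPi c v) * (G.diam : ℝ) := mul_le_mul_of_nonneg_left h2 hEn
  -- commute time formula
  have hcomm := commute_formula hP0 hP1 hrev hxy (hdec x) (hdec y)
  have hA : 0 < netPi c x * esc (netStep c) x y :=
    mul_pos (hπpos x) (esc_pos hP0 hP1 (hdec y) hxy)
  have hhtsum : ht (netStep c) y x + ht (netStep c) x y
      = (∑ v, netPi c v) / (netPi c x * esc (netStep c) x y) := by
    rw [eq_div_iff hA.ne']
    linarith [hcomm]
  -- second moments
  have h1 := sq_moment_le hP0 hP1 (hdec y) (fun w => hM y w) x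
  have h2 := sq_moment_le hP0 hP1 (hdec x) (fun w => hM x w) y
  have hmo1 : hitMoment c x y 2 = ∑' n : ℕ, (n:ℝ) ^ 2 * kit (netStep c) {y} (dd y) n x := by
    unfold hitMoment
    exact tsum_congr fun n => by rw [hitPMF_eq y n x]
  have hmo2 : hitMoment c y x 2 = ∑' n : ℕ, (n:ℝ) ^ 2 * kit (netStep c) {x} (dd x) n y := by
    unfold hitMoment
    exact tsum_congr fun n => by rw [hitPMF_eq x n y]
  have hreff : Reff c x y = 1 / (netPi c x * esc (netStep c) x y) := by
    unfold Reff
    rw [hescq]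
  -- numerics
  have hEπ2 : (∑ v, netPi c v) = 2 * (G.edgeFinset.card : ℝ) := by
    rw [Finset.sum_congr rfl fun v _ => hπdeg v, ← Nat.cast_sum,
      SimpleGraph.sum_degrees_eq_twice_card_edges]
    push_cast
    ring
  have hE1 : 1 ≤ (G.edgeFinset.card : ℝ) := by
    obtain ⟨p⟩ := hconn.preconnected x y
    cases p with
    | nil => exact absurd rfl hxy
    | @cons _ w _ h q =>
      have hmem : s(x, w) ∈ G.edgeFinset := by
        rw [SimpleGraph.mem_edgeFinset, SimpleGraph.mem_edgeSet]
        exact h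
      exact_mod_cast Nat.one_le_iff_ne_zero.mpr
        (Finset.card_ne_zero_of_mem hmem)
  have hdiam1 : 1 ≤ (G.diam : ℝ) := by
    exact_mod_cast Nat.one_le_iff_ne_zero.mpr hdiam0
  -- assembly
  set M : ℝ := (∑ v, netPi c v) * (G.diam : ℝ) with hMdef
  rw [hmo1, hmo2, hreff]
  have hstep1 : ∑' n : ℕ, (n:ℝ) ^ 2 * kit (netStep c) {y} (dd y) n x +
      ∑' n : ℕ, (n:ℝ) ^ 2 * kit (netStep c) {x} (dd x) n y
      ≤ (2 * M + 1) * (ht (netStep c) y x + ht (netStep c) x y) := by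
    have := add_le_add h1 h2
    nlinarith [this]
  have hfinal : (2 * M + 1) * ((∑ v, netPi c v) / (netPi c x * esc (netStep c) x y))
      ≤ 16 * (G.edgeFinset.card : ℝ) ^ 2 * (G.diam : ℝ)
        * (1 / (netPi c x * esc (netStep c) x y)) := by
    have hnum : (2 * M + 1) * (∑ v, netPi c v)
        ≤ 16 * (G.edgeFinset.card : ℝ) ^ 2 * (G.diam : ℝ) := by
      rw [hMdef, hEπ2]
      set E : ℝ := (G.edgeFinset.card : ℝ)
      set d : ℝ := (G.diam : ℝ)
      have hEd : 1 ≤ E * d := by nlinarith [hE1, hdiam1]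
      nlinarith [hE1, hdiam1, hEd, mul_le_mul_of_nonneg_left hEd
        (by nlinarith [hE1] : (0:ℝ) ≤ 8 * E)]
    have hApos : 0 < (netPi c x * esc (netStep c) x y)⁻¹ := inv_pos.mpr hA
    calc (2 * M + 1) * ((∑ v, netPi c v) / (netPi c x * esc (netStep c) x y))
        = ((2 * M + 1) * (∑ v, netPi c v)) * (1 / (netPi c x * esc (netStep c) x y)) := by
          ring
      _ ≤ (16 * (G.edgeFinset.card : ℝ) ^ 2 * (G.diam : ℝ))
            * (1 / (netPi c x * esc (netStep c) x y)) := by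
          refine mul_le_mul_of_nonneg_right hnum ?_
          rw [one_div]
          exact hApos.le
  calc ∑' n : ℕ, (n:ℝ) ^ 2 * kit (netStep c) {y} (dd y) n x +
      ∑' n : ℕ, (n:ℝ) ^ 2 * kit (netStep c) {x} (dd x) n y
      ≤ (2 * M + 1) * (ht (netStep c) y x + ht (netStep c) x y) := hstep1
    _ = (2 * M + 1) * ((∑ v, netPi c v) / (netPi c x * esc (netStep c) x y)) := by
        rw [hhtsum]
    _ ≤ 16 * (G.edgeFinset.card : ℝ) ^ 2 * (G.diam : ℝ)
        * (1 / (netPi c x * esc (netStep c) x y)) := hfinal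


end
end

section
/- With the notation of the crossing-count lemma (edges $e\prec e'$ in series in a tree network, $\eta=N R'-R$ with $E[N]=R/R'$ and $P[N\geq k]=p\,q^{k-1}$, $p=R\,C$, $1-q=R'\,C$ for $C=C_{\mathrm{eff}}(e_-,e_+')$): for every integer $r\geq 1$ there is a constant $C(r)$ depending only on $r$ such that $E[|\eta|^r]\leq C(r)\,R\,\big(C_{\mathrm{eff}}(e_-,e_+')^{-1}\big)^{r-1}$, i.e. $E[|\eta|^r]\leq C(r)\,R_{\mathrm{eff}}(e)\,R_{\mathrm{eff}}(e_-,e_+')^{r-1}$. -/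
open MeasureTheory

open Finset



lemma aux_df_mono (a b k : ℕ) (h : a ≤ b) : a.descFactorial k ≤ b.descFactorial k := by
  rw [Nat.descFactorial_eq_prod_range, Nat.descFactorial_eq_prod_range]
  exact Finset.prod_le_prod' fun i _ => Nat.sub_le_sub_right h i

lemma aux_pow_le_descFactorial (k m : ℕ) : (k+1)^m ≤ (k+m).descFactorial m := by
  induction m with
  | zero => simp
  | succ m ih =>
    have h1 : (k + (m+1)).descFactorial (m+1) = (k+1) * (k + (m+1)).descFactorial m := by
      rw [Nat.descFactorial_succ]; congr 1; omega
    rw [h1, pow_succ, mul_comm]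
    exact Nat.mul_le_mul_left _ (le_trans ih (aux_df_mono _ _ _ (by omega)))

lemma aux_tail_sum (m : ℕ) {q : ℝ} (h0 : 0 ≤ q) (h1 : q < 1) :
    Summable (fun k : ℕ => ((k : ℝ)+1)^m * q^k) ∧
    ∑' k : ℕ, ((k : ℝ)+1)^m * q^k ≤ m.factorial / (1-q)^(m+1) := by
  have hq : ‖q‖ < 1 := by rwa [Real.norm_eq_abs, abs_of_nonneg h0]
  have hsum := hasSum_choose_mul_geometric_of_norm_lt_one (𝕜 := ℝ) m hq
  have hS : Summable (fun k : ℕ => (m.factorial : ℝ) * ((((k+m).choose m : ℕ) : ℝ) * q^k)) :=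
    hsum.summable.mul_left _
  have hle : ∀ k : ℕ, ((k : ℝ)+1)^m * q^k ≤ m.factorial * ((((k+m).choose m : ℕ) : ℝ) * q^k) := by
    intro k
    rw [← mul_assoc]
    refine mul_le_mul_of_nonneg_right ?_ (pow_nonneg h0 k)
    have : (k+1)^m ≤ m.factorial * (k+m).choose m := by
      rw [← Nat.descFactorial_eq_factorial_mul_choose]
      exact aux_pow_le_descFactorial k m
    exact_mod_cast this
  have hpos : ∀ k : ℕ, 0 ≤ ((k : ℝ)+1)^m * q^k := fun k => by positivity
  refine ⟨Summable.of_nonneg_of_le hpos hle hS, ?_⟩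
  calc ∑' k : ℕ, ((k : ℝ)+1)^m * q^k
      ≤ ∑' k : ℕ, (m.factorial : ℝ) * ((((k+m).choose m : ℕ) : ℝ) * q^k) :=
        Summable.tsum_le_tsum hle (Summable.of_nonneg_of_le hpos hle hS) hS
    _ = (m.factorial : ℝ) * (1 / (1-q)^(m+1)) := by rw [tsum_mul_left, hsum.tsum_eq]
    _ = m.factorial / (1-q)^(m+1) := by ring

lemma aux_diff (m k : ℕ) :
    ((k:ℝ)+1)^(m+1) - (k:ℝ)^(m+1) ≤ ((m:ℝ)+1) * ((k:ℝ)+1)^m := by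
  have h := geom_sum₂_mul ((k:ℝ)+1) (k:ℝ) (m+1)
  have hd : ((k:ℝ)+1) - k = 1 := by ring
  rw [hd, mul_one] at h
  rw [← h]
  calc ∑ i ∈ range (m+1), ((k:ℝ)+1)^i * (k:ℝ)^(m+1-1-i)
      ≤ ∑ _i ∈ range (m+1), ((k:ℝ)+1)^m := by
        refine Finset.sum_le_sum fun i hi => ?_
        have hi' : i < m + 1 := Finset.mem_range.mp hi
        have he : m + 1 - 1 - i = m - i := by omega
        calc ((k:ℝ)+1)^i * (k:ℝ)^(m+1-1-i) ≤ ((k:ℝ)+1)^i * ((k:ℝ)+1)^(m-i) := by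
              rw [he]
              exact mul_le_mul_of_nonneg_left
                (pow_le_pow_left₀ (Nat.cast_nonneg k) (by linarith) _) (by positivity)
          _ = ((k:ℝ)+1)^m := by rw [← pow_add]; congr 1; omega
    _ = ((m:ℝ)+1) * ((k:ℝ)+1)^m := by
        rw [Finset.sum_const, card_range, nsmul_eq_mul]; push_cast; ring


lemma aux_key (m : ℕ) (Ω : Type) [MeasurableSpace Ω] (μ : Measure Ω) [IsProbabilityMeasure μ]
    (N : Ω → ℕ) (hN : Measurable N) (p q : ℝ) (hp0 : 0 ≤ p) (hq0 : 0 ≤ q) (hq1 : q < 1)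
    (htail : ∀ k : ℕ, 1 ≤ k → (μ {ω | k ≤ N ω}).toReal = p * q ^ (k - 1)) :
    ∫⁻ ω, ENNReal.ofReal ((N ω : ℝ)^(m+1)) ∂μ ≤
      ENNReal.ofReal ((m+1).factorial * p / (1-q)^(m+1)) := by
  set d : ℕ → ℝ := fun k => ((k:ℝ)+1)^(m+1) - (k:ℝ)^(m+1) with hd
  have hdnn : ∀ k, 0 ≤ d k := fun k =>
    sub_nonneg.2 (pow_le_pow_left₀ (Nat.cast_nonneg k) (by linarith) _)
  have hmeas : ∀ k : ℕ, MeasurableSet {ω | k+1 ≤ N ω} := fun k => hN (by trivial)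
  have hμk : ∀ k : ℕ, μ {ω | k+1 ≤ N ω} = ENNReal.ofReal (p * q^k) := by
    intro k
    have h := htail (k+1) (by omega)
    simp only [Nat.add_sub_cancel] at h
    rw [← h, ENNReal.ofReal_toReal (measure_ne_top μ _)]
  have hpt : ∀ ω, ENNReal.ofReal ((N ω : ℝ)^(m+1)) =
      ∑' k : ℕ, Set.indicator {ω' | k+1 ≤ N ω'} (fun _ => ENNReal.ofReal (d k)) ω := by
    intro ω
    have hind : ∀ k : ℕ, Set.indicator {ω' | k+1 ≤ N ω'} (fun _ => ENNReal.ofReal (d k)) ω =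
        if k < N ω then ENNReal.ofReal (d k) else 0 := by
      intro k
      rw [Set.indicator_apply]
      congr 1
    simp only [hind]
    rw [tsum_eq_sum (s := Finset.range (N ω))
      (by intro k hk; rw [if_neg]; simpa using hk)]
    rw [Finset.sum_congr rfl (fun k hk => if_pos (Finset.mem_range.mp hk)),
      ← ENNReal.ofReal_sum_of_nonneg (fun k _ => hdnn k)]
    congr 1
    have hs := Finset.sum_range_sub (fun k : ℕ => ((k:ℝ))^(m+1)) (N ω)
    simp only [hd]
    push_cast at hs ⊢
    rw [hs]
    simp
  calc ∫⁻ ω, ENNReal.ofReal ((N ω : ℝ)^(m+1)) ∂μ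
      = ∑' k : ℕ, ENNReal.ofReal (d k) * μ {ω | k+1 ≤ N ω} := by
        simp only [hpt]
        rw [lintegral_tsum (fun k => (measurable_const.indicator (hmeas k)).aemeasurable)]
        congr 1
        ext k
        rw [lintegral_indicator_const (hmeas k)]
    _ = ∑' k : ℕ, ENNReal.ofReal (d k * (p * q^k)) := by
        refine tsum_congr fun k => ?_
        rw [hμk k, ← ENNReal.ofReal_mul (hdnn k)]
    _ ≤ ∑' k : ℕ, ENNReal.ofReal ((((m:ℝ)+1) * ((k:ℝ)+1)^m) * (p * q^k)) := by
        refine Summable.tsum_le_tsum (fun k => ENNReal.ofReal_le_ofReal ?_)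
          ENNReal.summable ENNReal.summable
        exact mul_le_mul_of_nonneg_right (by simpa [hd] using aux_diff m k) (by positivity)
    _ = ENNReal.ofReal (∑' k : ℕ, (((m:ℝ)+1) * ((k:ℝ)+1)^m) * (p * q^k)) := by
        rw [ENNReal.ofReal_tsum_of_nonneg (fun k => by positivity) ?_]
        have := (aux_tail_sum m hq0 hq1).1
        have h2 : (fun k : ℕ => (((m:ℝ)+1) * ((k:ℝ)+1)^m) * (p * q^k)) =
            fun k : ℕ => (((m:ℝ)+1) * p) * (((k:ℝ)+1)^m * q^k) := by
          funext k; ring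
        rw [h2]
        exact this.mul_left _
    _ ≤ ENNReal.ofReal ((m+1).factorial * p / (1-q)^(m+1)) := by
        refine ENNReal.ofReal_le_ofReal ?_
        have h2 : (fun k : ℕ => (((m:ℝ)+1) * ((k:ℝ)+1)^m) * (p * q^k)) =
            fun k : ℕ => (((m:ℝ)+1) * p) * (((k:ℝ)+1)^m * q^k) := by
          funext k; ring
        rw [h2, tsum_mul_left]
        have hb := (aux_tail_sum m hq0 hq1).2
        calc (((m:ℝ)+1) * p) * ∑' k : ℕ, ((k:ℝ)+1)^m * q^k
            ≤ (((m:ℝ)+1) * p) * ((m.factorial : ℝ) / (1-q)^(m+1)) := by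
              refine mul_le_mul_of_nonneg_left hb (by positivity)
          _ = (m+1).factorial * p / (1-q)^(m+1) := by
              rw [Nat.factorial_succ]; push_cast; ring

/-- **Moment bounds for the centered crossing count.**
With the notation of the crossing-count lemma (`N` with `P[N ≥ k] = p q^{k-1}`,
`p = R·C`, `1-q = R'·C`, `η = N R' - R`, and `R ≤ 1/C = R_eff(e₋,e₊')`):
for every integer `r ≥ 1` there is a constant `K = C(r)` depending only on `r` such that
`E[|η|^r] ≤ C(r) · R · (C⁻¹)^{r-1}`, i.e.
`E[|η|^r] ≤ C(r) · R_eff(e) · R_eff(e₋,e₊')^{r-1}`. -/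
theorem crossing_number_moment_bound (r : ℕ) (hr : 1 ≤ r) :
    ∃ K : ℝ, 0 < K ∧
      ∀ (Ω : Type) (_ : MeasurableSpace Ω) (μ : Measure Ω), IsProbabilityMeasure μ →
      ∀ (N : Ω → ℕ), Measurable N →
      ∀ (p q R R' C : ℝ),
        0 < C → 0 < R → 0 < R' →
        p = R * C → 1 - q = R' * C → p ≤ 1 → 0 ≤ q → R ≤ C⁻¹ →
        (∀ k : ℕ, 1 ≤ k → (μ {ω | k ≤ N ω}).toReal = p * q ^ (k - 1)) →
        ∫ ω, |(N ω : ℝ) * R' - R| ^ r ∂μ ≤ K * R * (C⁻¹) ^ (r - 1) := by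
  obtain ⟨m, rfl⟩ : ∃ m, r = m + 1 := ⟨r - 1, (Nat.succ_pred_eq_of_pos hr).symm⟩
  refine ⟨2^(m+1) * (1 + ((m+1).factorial : ℝ)), by positivity, ?_⟩
  intro Ω inst μ hμ N hN p q R R' C hC hR hR' hp hq hp1 hq0 hRC htail
  simp only [Nat.add_sub_cancel]
  have hq1 : q < 1 := by nlinarith
  have hp0 : 0 ≤ p := by nlinarith
  have hNc : Measurable fun ω => (N ω : ℝ) := measurable_from_top.comp hN
  have hfm : Measurable fun ω => |(N ω : ℝ) * R' - R| ^ (m+1) :=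
    (((hNc.mul_const R').sub_const R).abs).pow_const _
  have hnn : ∀ ω, (0:ℝ) ≤ |(N ω : ℝ) * R' - R| ^ (m+1) := fun ω => by positivity
  rw [integral_eq_lintegral_of_nonneg_ae (ae_of_all _ hnn) hfm.aestronglyMeasurable]
  refine ENNReal.toReal_le_of_le_ofReal (by positivity) ?_
  have key := aux_key m Ω μ N hN p q hp0 hq0 hq1 htail
  have hpoint : ∀ ω, ENNReal.ofReal (|(N ω:ℝ)*R'-R|^(m+1)) ≤
      ENNReal.ofReal (2^(m+1)*R^(m+1)) +
        ENNReal.ofReal (2^(m+1)*R'^(m+1)) * ENNReal.ofReal ((N ω:ℝ)^(m+1)) := by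
    intro ω
    set x := (N ω : ℝ) with hx
    have hx0 : 0 ≤ x := Nat.cast_nonneg _
    have h2 : |x*R'-R|^(m+1) ≤ 2^(m+1)*R^(m+1) + 2^(m+1)*R'^(m+1)*x^(m+1) := by
      have h1 : |x*R'-R| ≤ R + R'*x := abs_le.2 ⟨by nlinarith, by nlinarith⟩
      calc |x*R'-R|^(m+1) ≤ (R+R'*x)^(m+1) := pow_le_pow_left₀ (abs_nonneg _) h1 _
        _ ≤ (2*max R (R'*x))^(m+1) := by
            refine pow_le_pow_left₀ (by positivity) ?_ _
            rcases le_total R (R'*x) with h | h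
            · rw [max_eq_right h]; nlinarith
            · rw [max_eq_left h]; nlinarith
        _ = 2^(m+1) * (max R (R'*x))^(m+1) := mul_pow _ _ _
        _ ≤ 2^(m+1) * (R^(m+1) + (R'*x)^(m+1)) := by
            refine mul_le_mul_of_nonneg_left ?_ (by positivity)
            rcases max_cases R (R'*x) with ⟨he, _⟩ | ⟨he, _⟩ <;> rw [he] <;>
              nlinarith [pow_nonneg (mul_nonneg hR'.le hx0) (m+1), pow_nonneg hR.le (m+1)]
        _ = 2^(m+1)*R^(m+1) + 2^(m+1)*R'^(m+1)*x^(m+1) := by rw [mul_pow R' x]; ring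
    calc ENNReal.ofReal (|x*R'-R|^(m+1))
        ≤ ENNReal.ofReal (2^(m+1)*R^(m+1) + 2^(m+1)*R'^(m+1)*x^(m+1)) :=
          ENNReal.ofReal_le_ofReal h2
      _ = ENNReal.ofReal (2^(m+1)*R^(m+1)) +
            ENNReal.ofReal (2^(m+1)*R'^(m+1)) * ENNReal.ofReal (x^(m+1)) := by
          rw [ENNReal.ofReal_add (by positivity) (by positivity),
            ← ENNReal.ofReal_mul (by positivity)]
  have harith : 2^(m+1)*R^(m+1) + 2^(m+1)*R'^(m+1) * ((m+1).factorial * p / (1-q)^(m+1))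
      ≤ 2^(m+1) * (1 + ((m+1).factorial : ℝ)) * R * C⁻¹^m := by
    have ht2 : 2^(m+1)*R'^(m+1) * ((m+1).factorial * p / (1-q)^(m+1)) =
        2^(m+1) * ((m+1).factorial : ℝ) * R * C⁻¹^m := by
      rw [hq, hp]
      field_simp
      have hCm : C^m * C⁻¹^m = 1 := by rw [← mul_pow, mul_inv_cancel₀ hC.ne', one_pow]
      linear_combination (-(R' * R' ^ m * C)) * hCm
    have ht1 : (2:ℝ)^(m+1)*R^(m+1) ≤ 2^(m+1) * R * C⁻¹^m := by
      have h : (2:ℝ)^(m+1)*R^(m+1) = 2^(m+1) * R * R^m := by ring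
      rw [h]
      gcongr
    have hrhs : 2^(m+1) * (1 + ((m+1).factorial:ℝ)) * R * C⁻¹^m =
        2^(m+1)*R*C⁻¹^m + 2^(m+1) * ((m+1).factorial:ℝ) * R * C⁻¹^m := by ring
    rw [ht2, hrhs]
    linarith
  calc ∫⁻ ω, ENNReal.ofReal (|(N ω:ℝ)*R'-R|^(m+1)) ∂μ
      ≤ ∫⁻ ω, (ENNReal.ofReal (2^(m+1)*R^(m+1)) +
          ENNReal.ofReal (2^(m+1)*R'^(m+1)) * ENNReal.ofReal ((N ω:ℝ)^(m+1))) ∂μ :=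
        lintegral_mono hpoint
    _ = ENNReal.ofReal (2^(m+1)*R^(m+1)) +
          ENNReal.ofReal (2^(m+1)*R'^(m+1)) * ∫⁻ ω, ENNReal.ofReal ((N ω:ℝ)^(m+1)) ∂μ := by
        rw [lintegral_add_left measurable_const,
          lintegral_const_mul _ ((hNc.pow_const _).ennreal_ofReal),
          lintegral_const, measure_univ, mul_one]
    _ ≤ ENNReal.ofReal (2^(m+1)*R^(m+1)) +
          ENNReal.ofReal (2^(m+1)*R'^(m+1)) *
            ENNReal.ofReal ((m+1).factorial * p / (1-q)^(m+1)) := by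
        exact add_le_add_right (mul_le_mul_right key _) _
    _ = ENNReal.ofReal (2^(m+1)*R^(m+1) +
          2^(m+1)*R'^(m+1) * ((m+1).factorial * p / (1-q)^(m+1))) := by
        have h1q : (0:ℝ) < 1 - q := by linarith
        rw [← ENNReal.ofReal_mul (by positivity),
          ← ENNReal.ofReal_add (by positivity) (by positivity)]
    _ ≤ ENNReal.ofReal (2^(m+1) * (1 + ((m+1).factorial : ℝ)) * R * C⁻¹^m) :=
        ENNReal.ofReal_le_ofReal harith
end

section
/- Let $(\sigma_i)_{i\geq 1}$ be an i.i.d. sequence of nonnegative random variables with $P[\sigma_1\geq 1]\geq p$ for some $p\in(0,1]$, and let $L_T:=\max\{m: \sum_{i=1}^m \sigma_i\leq T\}$ for a fixed $T>0$. Then $P[p\,L_T\geq m]\leq P[\mathrm{Bin}(\lfloor m/p\rfloor, p)\leq T]$, and consequently there exist constants $c_1,c_2>0$ depending only on $T$ such that $P[p\,L_T\geq m]\leq c_1 e^{-c_2 m}$ for all $m\geq 0$. -/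
open MeasureTheory ProbabilityTheory
open scoped BigOperators

/-- The event `{p · L_T ≥ m}` where `L_T = max{k : σ₁ + ⋯ + σ_k ≤ T}` is the renewal count:
since the `σᵢ` are nonnegative, `L_T ≥ k ↔ ∑_{i=1}^k σᵢ ≤ T`. -/
def renewalTailEvent {Ω : Type*} (σ : ℕ → Ω → ℝ) (p T m : ℝ) : Set Ω :=
  {ω | ∃ k : ℕ, m ≤ p * k ∧ ∑ i ∈ Finset.Icc 1 k, σ i ω ≤ T}

/-- Lower tail of a binomial distribution: `P[Bin(n,p) ≤ T]`. -/
noncomputable def binomialLowerTail (n : ℕ) (p T : ℝ) : ℝ :=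
  ∑ j ∈ Finset.range (⌊T⌋₊ + 1), (n.choose j : ℝ) * p ^ j * (1 - p) ^ (n - j)

section
open Finset
open scoped ENNReal

private noncomputable def bAux (n : ℕ) (x : ℝ) : ℕ → ℝ
  | 0 => 0
  | s+1 => (n : ℝ) * ((n-1).choose s) * x ^ s * (1-x) ^ (n-1-s)

private lemma binomCdf_hasDerivAt (n t : ℕ) (ht : t < n) (x : ℝ) :
    HasDerivAt (fun x : ℝ => ∑ j ∈ Finset.range (t+1), (n.choose j : ℝ) * x ^ j * (1-x) ^ (n-j))
      (-((n:ℝ) * ((n-1).choose t) * x ^ t * (1-x) ^ (n-1-t))) x := by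
  have key : HasDerivAt (fun x : ℝ => ∑ j ∈ Finset.range (t+1), (n.choose j : ℝ) * x ^ j * (1-x) ^ (n-j))
      (∑ j ∈ Finset.range (t+1), (bAux n x j - bAux n x (j+1))) x := by
    apply HasDerivAt.fun_sum
    intro j hj
    have hjn : j < n := by have := Finset.mem_range.mp hj; omega
    have hy : HasDerivAt (fun y : ℝ => (1 - y)) (-1) x := by
      simpa using (hasDerivAt_id x).const_sub 1
    have h1 := ((hasDerivAt_pow j x).fun_mul (hy.fun_pow (n-j))).const_mul ((n.choose j : ℝ))
    have heq : (fun y : ℝ => (n.choose j : ℝ) * y ^ j * (1-y)^(n-j))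
        = (fun y : ℝ => (n.choose j : ℝ) * (y ^ j * (1-y)^(n-j))) := by funext y; ring
    rw [heq]
    refine h1.congr_deriv (Eq.symm ?_)
    obtain _ | s := j
    · simp only [bAux, Nat.sub_zero, Nat.choose_zero_right, Nat.cast_one, Nat.cast_zero,
        pow_zero, Nat.sub_self]
      ring
    · simp only [bAux]
      have hn1 : n - 1 + 1 = n := by omega
      have e1 : (n:ℝ) * ((n-1).choose s) = (n.choose (s+1)) * ((s:ℝ)+1) := by
        have h := Nat.add_one_mul_choose_eq (n-1) s
        simp only [Nat.succ_eq_add_one, hn1] at h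
        exact_mod_cast h
      have e2 : (n:ℝ) * ((n-1).choose (s+1)) = (n.choose (s+1)) * ((n - (s+1) : ℕ) : ℝ) := by
        have h := Nat.choose_mul_succ_eq (n-1) (s+1)
        rw [hn1] at h
        rw [mul_comm ((n-1).choose (s+1)) n] at h
        exact_mod_cast h
      have e3 : n - 1 - s = n - (s+1) := by omega
      have e4 : n - 1 - (s+1) = n - (s+1) - 1 := by omega
      have e5 : s + 1 - 1 = s := by omega
      rw [e3, e4, e5]
      push_cast
      linear_combination (x^s*(1-x)^(n-(s+1))) * e1 - (x^(s+1)*(1-x)^(n-(s+1)-1)) * e2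
  have hsum : (∑ j ∈ Finset.range (t+1), (bAux n x j - bAux n x (j+1)))
      = -((n:ℝ) * ((n-1).choose t) * x ^ t * (1-x) ^ (n-1-t)) := by
    rw [Finset.sum_range_sub' (f := fun j => bAux n x j)]
    simp [bAux]
  rwa [hsum] at key

private lemma binomCdf_antitoneOn (n t : ℕ) :
    AntitoneOn (fun x : ℝ => ∑ j ∈ Finset.range (t+1), (n.choose j : ℝ) * x ^ j * (1-x) ^ (n-j))
      (Set.Icc 0 1) := by
  by_cases ht : t < n
  · have key := binomCdf_hasDerivAt n t ht
    apply antitoneOn_of_deriv_nonpos (convex_Icc 0 1)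
    · exact Continuous.continuousOn (by
        exact continuous_iff_continuousAt.mpr fun x => (key x).differentiableAt.continuousAt)
    · exact fun x _ => (key x).differentiableAt.differentiableWithinAt
    · intro x hx
      rw [interior_Icc] at hx
      rw [(key x).deriv]
      have h1 : (0:ℝ) ≤ x ^ t := pow_nonneg hx.1.le t
      have h2 : (0:ℝ) ≤ (1-x) ^ (n-1-t) := pow_nonneg (by linarith [hx.2]) _
      have h3 : (0:ℝ) ≤ (n:ℝ) * ((n-1).choose t) := by positivity
      have := mul_nonneg (mul_nonneg h3 h1) h2
      linarith
  · -- t ≥ n : the sum is constantly 1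
    have hconst : ∀ x : ℝ, (∑ j ∈ Finset.range (t+1), (n.choose j : ℝ) * x ^ j * (1-x) ^ (n-j)) = 1 := by
      intro x
      have hsub : Finset.range (n+1) ⊆ Finset.range (t+1) := by
        apply Finset.range_subset_range.mpr; omega
      rw [← Finset.sum_subset hsub (fun j _ hj => by
        have hj' : n < j := by simp only [Finset.mem_range, not_lt] at hj; omega
        simp [Nat.choose_eq_zero_of_lt hj'])]
      have h2 : (∑ j ∈ Finset.range (n+1), (n.choose j : ℝ) * x ^ j * (1-x) ^ (n-j))
          = (x + (1-x))^n := by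
        rw [add_pow]
        exact Finset.sum_congr rfl fun j _ => by ring
      rw [h2]
      norm_num
    intro a _ b _ _
    simp only [hconst]
    exact le_refl 1

private lemma prob_le_binom {Ω : Type} [MeasurableSpace Ω] (μ : Measure Ω) [IsProbabilityMeasure μ]
    (σ : ℕ → Ω → ℝ) (hmeas : ∀ i, Measurable (σ i)) (hnn : ∀ i ω, 0 ≤ σ i ω)
    (hind : iIndepFun σ μ)
    (hid : ∀ i, 1 ≤ i → IdentDistrib (σ i) (σ 1) μ μ)
    (n : ℕ) (T : ℝ) :
    (μ {ω | ∑ i ∈ Finset.Icc 1 n, σ i ω ≤ T}).toReal ≤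
      ∑ j ∈ Finset.range (⌊T⌋₊ + 1),
        (n.choose j : ℝ) * ((μ {ω | 1 ≤ σ 1 ω}).toReal) ^ j
          * (1 - (μ {ω | 1 ≤ σ 1 ω}).toReal) ^ (n - j) := by
  classical
  set t := ⌊T⌋₊ with ht
  have hset : {ω | 1 ≤ σ 1 ω} = σ 1 ⁻¹' Set.Ici 1 := rfl
  set q := (μ {ω | 1 ≤ σ 1 ω}).toReal with hq
  set Q : ℝ≥0∞ := μ (σ 1 ⁻¹' Set.Ici 1) with hQ
  set R : ℝ≥0∞ := μ (σ 1 ⁻¹' Set.Iio 1) with hR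
  have hq1 : q ≤ 1 := by rw [hq]; exact ENNReal.toReal_le_of_le_ofReal one_pos.le (by
    simpa using prob_le_one)
  have hRval : R.toReal = 1 - q := by
    have hcompl : σ 1 ⁻¹' Set.Iio 1 = (σ 1 ⁻¹' Set.Ici 1)ᶜ := by
      ext ω; simp [Set.mem_preimage, not_le]
    rw [hR, hcompl, measure_compl ((hmeas 1) measurableSet_Ici) (measure_ne_top μ _)]
    rw [measure_univ, ENNReal.toReal_sub_of_le prob_le_one ENNReal.one_ne_top]
    simp [hq, hset]
  -- the events A S
  set A : Finset ℕ → Set Ω := fun S =>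
    ⋂ i ∈ Finset.Icc 1 n, σ i ⁻¹' (if i ∈ S then Set.Ici (1:ℝ) else Set.Iio 1) with hA
  set 𝒮 : Finset (Finset ℕ) := (Finset.Icc 1 n).powerset.filter (fun S => S.card ≤ t) with h𝒮
  -- subset claim
  have hsub : {ω | ∑ i ∈ Finset.Icc 1 n, σ i ω ≤ T} ⊆ ⋃ S ∈ 𝒮, A S := by
    intro ω hω
    set S := (Finset.Icc 1 n).filter (fun i => 1 ≤ σ i ω) with hS
    have hScard : (S.card : ℝ) ≤ T := by
      calc (S.card : ℝ) = ∑ _i ∈ S, (1:ℝ) := by simp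
        _ ≤ ∑ i ∈ S, σ i ω := Finset.sum_le_sum fun i hi => (Finset.mem_filter.mp hi).2
        _ ≤ ∑ i ∈ Finset.Icc 1 n, σ i ω :=
            Finset.sum_le_sum_of_subset_of_nonneg (Finset.filter_subset _ _)
              (fun i _ _ => hnn i ω)
        _ ≤ T := hω
    have hmemS : S ∈ 𝒮 := by
      rw [h𝒮, Finset.mem_filter]
      exact ⟨Finset.mem_powerset.mpr (Finset.filter_subset _ _), Nat.le_floor hScard⟩
    refine Set.mem_biUnion hmemS ?_
    rw [hA]
    refine Set.mem_iInter₂.mpr fun i hi => ?_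
    by_cases h : 1 ≤ σ i ω
    · have : i ∈ S := Finset.mem_filter.mpr ⟨hi, h⟩
      simp [this, h]
    · have : i ∉ S := fun hc => h (Finset.mem_filter.mp hc).2
      simp only [this, if_neg]
      simpa [Set.mem_preimage] using lt_of_not_ge h
  -- measure of A S
  have hAS : ∀ S ∈ 𝒮, μ (A S) = Q ^ S.card * R ^ (n - S.card) := by
    intro S hSmem
    have hSsub : S ⊆ Finset.Icc 1 n := Finset.mem_powerset.mp (Finset.mem_filter.mp hSmem).1
    have hprod : μ (A S) = ∏ i ∈ Finset.Icc 1 n,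
        μ (σ i ⁻¹' (if i ∈ S then Set.Ici (1:ℝ) else Set.Iio 1)) := by
      rw [hA]
      refine hind.meas_biInter fun i _ => ?_
      refine ⟨if i ∈ S then Set.Ici (1:ℝ) else Set.Iio 1, ?_, rfl⟩
      split <;> measurability
    rw [hprod]
    have hval : ∀ i ∈ Finset.Icc 1 n,
        μ (σ i ⁻¹' (if i ∈ S then Set.Ici (1:ℝ) else Set.Iio 1))
          = (if i ∈ S then Q else R) := by
      intro i hi
      have h1i : 1 ≤ i := (Finset.mem_Icc.mp hi).1
      split
      · exact (hid i h1i).measure_mem_eq measurableSet_Ici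
      · exact (hid i h1i).measure_mem_eq measurableSet_Iio
    rw [Finset.prod_congr rfl hval]
    rw [← Finset.union_sdiff_of_subset hSsub, Finset.prod_union (Finset.disjoint_sdiff)]
    rw [Finset.prod_congr rfl (fun i hi => if_pos hi),
      Finset.prod_congr rfl (fun i (hi : i ∈ Finset.Icc 1 n \ S) =>
        if_neg (Finset.mem_sdiff.mp hi).2)]
    rw [Finset.prod_const, Finset.prod_const, Finset.card_sdiff_of_subset hSsub, Nat.card_Icc]
    norm_num
  -- bound the measure
  have hmono : μ {ω | ∑ i ∈ Finset.Icc 1 n, σ i ω ≤ T} ≤ ∑ S ∈ 𝒮, μ (A S) :=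
    le_trans (measure_mono hsub) (measure_biUnion_finset_le 𝒮 A)
  have hfin : (∑ S ∈ 𝒮, μ (A S)) ≠ ⊤ :=
    (ENNReal.sum_lt_top.mpr fun S _ => (measure_lt_top μ _)).ne
  have hstep : (μ {ω | ∑ i ∈ Finset.Icc 1 n, σ i ω ≤ T}).toReal
      ≤ ∑ S ∈ 𝒮, q ^ S.card * (1 - q) ^ (n - S.card) := by
    refine le_trans (ENNReal.toReal_mono hfin hmono) ?_
    rw [ENNReal.toReal_sum (fun S _ => measure_ne_top μ _)]
    refine le_of_eq (Finset.sum_congr rfl fun S hSmem => ?_)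
    rw [hAS S hSmem, ENNReal.toReal_mul, ENNReal.toReal_pow, ENNReal.toReal_pow, hRval]
    rfl
  refine hstep.trans (le_of_eq ?_)
  -- regroup by cardinality
  have hdecomp : 𝒮 = (Finset.range (t+1)).biUnion
      (fun j => (Finset.Icc 1 n).powersetCard j) := by
    ext S
    simp only [h𝒮, Finset.mem_filter, Finset.mem_powerset, Finset.mem_biUnion,
      Finset.mem_range, Finset.mem_powersetCard, Nat.lt_succ_iff]
    constructor
    · rintro ⟨h1, h2⟩; exact ⟨S.card, h2, h1, rfl⟩
    · rintro ⟨j, hj, h1, rfl⟩; exact ⟨h1, hj⟩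
  rw [hdecomp, Finset.sum_biUnion (fun a _ b _ hab => Finset.disjoint_left.mpr
    (fun S hSa hSb => hab ((Finset.mem_powersetCard.mp hSa).2.symm.trans
      (Finset.mem_powersetCard.mp hSb).2)))]
  refine Finset.sum_congr rfl fun j _ => ?_
  rw [Finset.sum_congr rfl (fun S hS => by
    rw [(Finset.mem_powersetCard.mp hS).2]),
    Finset.sum_const, Finset.card_powersetCard, Nat.card_Icc]
  simp only [Nat.add_sub_cancel, nsmul_eq_mul]
  ring

private lemma binom_tail_chernoff (t n : ℕ) (p m : ℝ) (hp0 : 0 < p) (hp1 : p ≤ 1)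
    (hm : 0 ≤ m) (hn : m / p < n + 1) :
    ∑ j ∈ Finset.range (t + 1), (n.choose j : ℝ) * p ^ j * (1 - p) ^ (n - j)
      ≤ 2 ^ t * Real.exp (1/2) * Real.exp (-(1/2) * m) := by
  have h1p : (0:ℝ) ≤ 1 - p := by linarith
  have hstep1 : ∑ j ∈ Finset.range (t + 1), (n.choose j : ℝ) * p ^ j * (1 - p) ^ (n - j)
      ≤ 2 ^ t * ∑ j ∈ Finset.range (t + 1), (n.choose j : ℝ) * (p/2) ^ j * (1 - p) ^ (n - j) := by
    rw [Finset.mul_sum]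
    refine Finset.sum_le_sum fun j hj => ?_
    have hj' : j ≤ t := Nat.lt_succ_iff.mp (Finset.mem_range.mp hj)
    have h2j : (2:ℝ) ^ j ≤ 2 ^ t := pow_le_pow_right₀ one_le_two hj'
    have hpj : p ^ j = 2 ^ j * (p/2) ^ j := by rw [← mul_pow]; ring_nf
    rw [hpj]
    have hfac : (0:ℝ) ≤ (n.choose j : ℝ) * (p/2) ^ j * (1-p) ^ (n-j) := by positivity
    calc (n.choose j : ℝ) * (2 ^ j * (p/2) ^ j) * (1 - p) ^ (n - j)
        = 2 ^ j * ((n.choose j : ℝ) * (p/2) ^ j * (1-p) ^ (n-j)) := by ring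
      _ ≤ 2 ^ t * ((n.choose j : ℝ) * (p/2) ^ j * (1-p) ^ (n-j)) :=
          mul_le_mul_of_nonneg_right h2j hfac
      _ = 2 ^ t * ((n.choose j : ℝ) * (p/2) ^ j * (1-p) ^ (n-j)) := rfl
  have hstep2 : ∑ j ∈ Finset.range (t + 1), (n.choose j : ℝ) * (p/2) ^ j * (1 - p) ^ (n - j)
      ≤ (1 - p/2) ^ n := by
    have hN : Finset.range (t+1) ⊆ Finset.range (max t n + 1) :=
      Finset.range_subset_range.mpr (by omega)
    have hN' : Finset.range (n+1) ⊆ Finset.range (max t n + 1) :=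
      Finset.range_subset_range.mpr (by omega)
    calc ∑ j ∈ Finset.range (t + 1), (n.choose j : ℝ) * (p/2) ^ j * (1 - p) ^ (n - j)
        ≤ ∑ j ∈ Finset.range (max t n + 1), (n.choose j : ℝ) * (p/2) ^ j * (1 - p) ^ (n - j) :=
          Finset.sum_le_sum_of_subset_of_nonneg hN (fun j _ _ => by positivity)
      _ = ∑ j ∈ Finset.range (n + 1), (n.choose j : ℝ) * (p/2) ^ j * (1 - p) ^ (n - j) := by
          refine (Finset.sum_subset hN' fun j _ hj => ?_).symm
          have hj' : n < j := by simp only [Finset.mem_range, not_lt] at hj; omega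
          simp [Nat.choose_eq_zero_of_lt hj']
      _ = (p/2 + (1 - p)) ^ n := by
          rw [add_pow]
          exact Finset.sum_congr rfl fun j _ => by ring
      _ = (1 - p/2) ^ n := by ring_nf
  have hstep3 : (1 - p/2 : ℝ) ^ n ≤ Real.exp (1/2) * Real.exp (-(1/2) * m) := by
    have hexp : (1 - p/2 : ℝ) ≤ Real.exp (-(p/2)) := by
      have := Real.add_one_le_exp (-(p/2))
      linarith
    have h0 : (0:ℝ) ≤ 1 - p/2 := by linarith
    calc (1 - p/2 : ℝ) ^ n ≤ Real.exp (-(p/2)) ^ n := pow_le_pow_left₀ h0 hexp n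
      _ = Real.exp (n * (-(p/2))) := by rw [← Real.exp_nat_mul]
      _ ≤ Real.exp (1/2 + (-(1/2) * m)) := by
          apply Real.exp_le_exp.mpr
          have hmp : m - p ≤ p * n := by
            have := (div_lt_iff₀ hp0).mp hn
            nlinarith
          nlinarith
      _ = Real.exp (1/2) * Real.exp (-(1/2) * m) := Real.exp_add _ _
  calc ∑ j ∈ Finset.range (t + 1), (n.choose j : ℝ) * p ^ j * (1 - p) ^ (n - j)
      ≤ 2 ^ t * ∑ j ∈ Finset.range (t + 1), (n.choose j : ℝ) * (p/2) ^ j * (1 - p) ^ (n - j) :=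
        hstep1
    _ ≤ 2 ^ t * (1 - p/2) ^ n := by
        apply mul_le_mul_of_nonneg_left hstep2 (by positivity)
    _ ≤ 2 ^ t * (Real.exp (1/2) * Real.exp (-(1/2) * m)) := by
        apply mul_le_mul_of_nonneg_left hstep3 (by positivity)
    _ = 2 ^ t * Real.exp (1/2) * Real.exp (-(1/2) * m) := by ring


end

/-- **Exponential tail bound for renewal counts.**
Let `(σᵢ)` be i.i.d. nonnegative with `P[σ₁ ≥ 1] ≥ p`, `p ∈ (0,1]`, and
`L_T = max{k : ∑_{i≤k} σᵢ ≤ T}` for a fixed `T > 0`. Then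
`P[p L_T ≥ m] ≤ P[Bin(⌊m/p⌋, p) ≤ T]`, and there exist `c₁, c₂ > 0` depending only on `T`
such that `P[p L_T ≥ m] ≤ c₁ e^{-c₂ m}` for all `m ≥ 0`. -/
theorem renewal_count_exponential_tail (T : ℝ) (hT : 0 < T) :
    (∀ (Ω : Type) (_ : MeasurableSpace Ω) (μ : Measure Ω), IsProbabilityMeasure μ →
      ∀ (σ : ℕ → Ω → ℝ), (∀ i, Measurable (σ i)) → (∀ i ω, 0 ≤ σ i ω) →
        iIndepFun σ μ →
        (∀ i, 1 ≤ i → IdentDistrib (σ i) (σ 1) μ μ) →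
        ∀ p : ℝ, 0 < p → p ≤ 1 →
          p ≤ (μ {ω | 1 ≤ σ 1 ω}).toReal →
          ∀ m : ℝ, 0 ≤ m →
            (μ (renewalTailEvent σ p T m)).toReal ≤
              binomialLowerTail ⌊m / p⌋₊ p T) ∧
    (∃ c₁ c₂ : ℝ, 0 < c₁ ∧ 0 < c₂ ∧
      ∀ (Ω : Type) (_ : MeasurableSpace Ω) (μ : Measure Ω), IsProbabilityMeasure μ →
      ∀ (σ : ℕ → Ω → ℝ), (∀ i, Measurable (σ i)) → (∀ i ω, 0 ≤ σ i ω) →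
        iIndepFun σ μ →
        (∀ i, 1 ≤ i → IdentDistrib (σ i) (σ 1) μ μ) →
        ∀ p : ℝ, 0 < p → p ≤ 1 →
          p ≤ (μ {ω | 1 ≤ σ 1 ω}).toReal →
          ∀ m : ℝ, 0 ≤ m →
            (μ (renewalTailEvent σ p T m)).toReal ≤ c₁ * Real.exp (-c₂ * m)) := by
  have key : ∀ (Ω : Type) (_ : MeasurableSpace Ω) (μ : Measure Ω), IsProbabilityMeasure μ →
      ∀ (σ : ℕ → Ω → ℝ), (∀ i, Measurable (σ i)) → (∀ i ω, 0 ≤ σ i ω) →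
        iIndepFun σ μ →
        (∀ i, 1 ≤ i → IdentDistrib (σ i) (σ 1) μ μ) →
        ∀ p : ℝ, 0 < p → p ≤ 1 →
          p ≤ (μ {ω | 1 ≤ σ 1 ω}).toReal →
          ∀ m : ℝ, 0 ≤ m →
            (μ (renewalTailEvent σ p T m)).toReal ≤ binomialLowerTail ⌊m / p⌋₊ p T := by
    intro Ω _ μ hprob σ hmeas hnn hind hid p hp0 hp1 hpq m hm
    set n := ⌊m / p⌋₊ with hn
    have hsub : renewalTailEvent σ p T m ⊆ {ω | ∑ i ∈ Finset.Icc 1 n, σ i ω ≤ T} := by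
      rintro ω ⟨k, hk1, hk2⟩
      have hdk : m / p ≤ (k:ℝ) := (div_le_iff₀ hp0).mpr (by linarith [hk1])
      have hnk : n ≤ k := by
        calc n = ⌊m / p⌋₊ := hn
          _ ≤ ⌊(k:ℝ)⌋₊ := Nat.floor_le_floor hdk
          _ = k := Nat.floor_natCast k
      exact le_trans (Finset.sum_le_sum_of_subset_of_nonneg
        (Finset.Icc_subset_Icc_right hnk) fun i _ _ => hnn i ω) hk2
    have h1 : (μ (renewalTailEvent σ p T m)).toReal
        ≤ (μ {ω | ∑ i ∈ Finset.Icc 1 n, σ i ω ≤ T}).toReal :=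
      ENNReal.toReal_mono (measure_ne_top μ _) (measure_mono hsub)
    have h2 := prob_le_binom μ σ hmeas hnn hind hid n T
    set q := (μ {ω | 1 ≤ σ 1 ω}).toReal with hq
    have hq1 : q ≤ 1 :=
      ENNReal.toReal_le_of_le_ofReal one_pos.le (by simpa using prob_le_one)
    have h3 : (∑ j ∈ Finset.range (⌊T⌋₊ + 1), ((n.choose j : ℝ)) * q ^ j * (1 - q) ^ (n - j))
        ≤ ∑ j ∈ Finset.range (⌊T⌋₊ + 1), ((n.choose j : ℝ)) * p ^ j * (1 - p) ^ (n - j) :=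
      binomCdf_antitoneOn n ⌊T⌋₊ ⟨hp0.le, hp1⟩ ⟨hp0.le.trans hpq, hq1⟩ hpq
    exact h1.trans (h2.trans h3)
  refine ⟨key, 2 ^ (⌊T⌋₊) * Real.exp (1/2), 1/2, by positivity, by norm_num, ?_⟩
  intro Ω _ μ hprob σ hmeas hnn hind hid p hp0 hp1 hpq m hm
  have h1 := key Ω _ μ hprob σ hmeas hnn hind hid p hp0 hp1 hpq m hm
  have h2 : binomialLowerTail ⌊m / p⌋₊ p T
      ≤ 2 ^ (⌊T⌋₊) * Real.exp (1/2) * Real.exp (-(1/2) * m) := by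
    apply binom_tail_chernoff ⌊T⌋₊ ⌊m / p⌋₊ p m hp0 hp1 hm
    exact_mod_cast Nat.lt_floor_add_one (m / p)
  refine h1.trans (h2.trans (le_of_eq ?_))
  norm_num
end
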